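/- arXiv:1202.5074 — 9 statements merged into one kernel-verified Lean document; each statement's English description precedes it below -/
import Mathlib

section
/- The number of a×b 0–1 matrices in which every two rows have numbers of nonzeros differing by at most one equals ∑_{i=0}^{b-1} (C(b,i) + C(b,i+1))^a − ∑_{i=1}^{b-1} C(b,i)^a. -/
/-- Number of nonzero (true) entries in row `i` of a 0-1 matrix. -/
def rowCount {a b : ℕ} (M : Fin a → Fin b → Bool) (i : Fin a) : ℕ :=
  (Finset.univ.filter (fun j => M i j = true)).card

/-- A 0-1 matrix is almost balanced if every two rows have numbers of
nonzeros differing by at most one. -/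
def AlmostBalanced {a b : ℕ} (M : Fin a → Fin b → Bool) : Prop :=
  ∀ i i' : Fin a, rowCount M i ≤ rowCount M i' + 1

/-!
An almost-balanced matrix with at least one row has a least row weight `m`; all its rows then
have weight `m` or `m + 1`, and `m` is attained. For fixed `m` there are
`(C(b,m) + C(b,m+1))^a` matrices with all row weights in `{m, m + 1}`, of which `C(b,m+1)^a`
never attain `m`. Summing over `0 ≤ m ≤ b` and shifting the index of the subtracted terms gives
the formula.
-/

open Finset

section Levels

variable {ι α : Type*} (w : α → ℕ)

theorem card_filter_forall_apply [Fintype ι] [DecidableEq ι] [Fintype α] (p : α → Prop)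
    [DecidablePred p] :
    #{f : ι → α | ∀ i, p (f i)} = #{x | p x} ^ Fintype.card ι := by
  have : ({f : ι → α | ∀ i, p (f i)} : Finset _) = Fintype.piFinset fun _ ↦ {x | p x} := by
    ext f
    simp [Fintype.mem_piFinset]
  simp [this]

def IsBalancedAt (m : ℕ) (f : ι → α) : Prop :=
  (∀ i, w (f i) = m ∨ w (f i) = m + 1) ∧ ∃ i, w (f i) = m

instance [Fintype ι] (m : ℕ) : DecidablePred (IsBalancedAt w m : (ι → α) → Prop) :=
  fun _ ↦ inferInstanceAs (Decidable (_ ∧ _))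

variable {w}

theorem IsBalancedAt.eq {m m' : ℕ} {f : ι → α} (h : IsBalancedAt w m f)
    (h' : IsBalancedAt w m' f) : m = m' := by
  obtain ⟨hf, i, hi⟩ := h
  obtain ⟨hf', i', hi'⟩ := h'
  have := hf i'
  have := hf' i
  omega

theorem IsBalancedAt.le {m n : ℕ} {f : ι → α} (hw : ∀ x, w x ≤ n) (h : IsBalancedAt w m f) :
    m ≤ n := by
  obtain ⟨_, i, rfl⟩ := h
  exact hw _

theorem forall_le_add_one_iff_exists_isBalancedAt [Finite ι] [Nonempty ι] {f : ι → α} :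
    (∀ i j, w (f i) ≤ w (f j) + 1) ↔ ∃ m, IsBalancedAt w m f := by
  constructor
  · intro h
    obtain ⟨i₀, hi₀⟩ := Finite.exists_min fun i ↦ w (f i)
    refine ⟨w (f i₀), fun i ↦ ?_, i₀, rfl⟩
    have := h i i₀
    have := hi₀ i
    omega
  · rintro ⟨m, hf, -⟩ i j
    have := hf i
    have := hf j
    omega

theorem card_isBalancedAt_add [Fintype ι] [DecidableEq ι] [Fintype α] (m : ℕ) :
    #{f : ι → α | IsBalancedAt w m f} + #{x | w x = m + 1} ^ Fintype.card ι =
      (#{x | w x = m} + #{x | w x = m + 1}) ^ Fintype.card ι := by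
  have hsplit : #{x | w x = m ∨ w x = m + 1} = #{x | w x = m} + #{x | w x = m + 1} := by
    classical
    rw [filter_or, card_union_of_disjoint (disjoint_filter.2 fun _ _ h ↦ by omega)]
  rw [← hsplit, ← card_filter_forall_apply, ← card_filter_forall_apply,
    ← card_filter_add_card_filter_not (s := {f : ι → α | ∀ i, w (f i) = m ∨ w (f i) = m + 1})
      (fun f ↦ ∃ i, w (f i) = m)]
  congr 2
  · ext f
    simp only [mem_filter, mem_univ, true_and]
    rfl
  · ext f
    simp only [mem_filter, mem_univ, true_and, not_exists]
    constructor
    · intro hf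
      exact ⟨fun i ↦ Or.inr (hf i), fun i ↦ by simp [hf i]⟩
    · rintro ⟨hf, hm⟩ i
      exact (hf i).resolve_left (hm i)

theorem card_forall_le_add_one_eq_sum [Fintype ι] [DecidableEq ι] [Nonempty ι] [Fintype α]
    [DecidableEq α] {n : ℕ} (hw : ∀ x, w x ≤ n) :
    (#{f : ι → α | ∀ i j, w (f i) ≤ w (f j) + 1} : ℤ) =
      ∑ m ∈ range (n + 1), (((#{x | w x = m} : ℤ) + #{x | w x = m + 1}) ^ Fintype.card ι -
        (#{x | w x = m + 1} : ℤ) ^ Fintype.card ι) := by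
  have hunion : ({f : ι → α | ∀ i j, w (f i) ≤ w (f j) + 1} : Finset _) =
      (range (n + 1)).biUnion fun m ↦ {f | IsBalancedAt w m f} := by
    ext f
    simp only [mem_filter, mem_univ, true_and, mem_biUnion, mem_range,
      forall_le_add_one_iff_exists_isBalancedAt]
    exact ⟨fun ⟨m, hm⟩ ↦ ⟨m, Nat.lt_succ_of_le (hm.le hw), hm⟩, fun ⟨m, _, hm⟩ ↦ ⟨m, hm⟩⟩
  have hdisj : (range (n + 1) : Set ℕ).PairwiseDisjoint
      fun m ↦ ({f : ι → α | IsBalancedAt w m f} : Finset _) :=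
    fun m _ m' _ hne ↦ disjoint_filter.2 fun _ _ hm hm' ↦ hne (hm.eq hm')
  rw [hunion, card_biUnion hdisj, Nat.cast_sum]
  refine sum_congr rfl fun m _ ↦ ?_
  have := congrArg (Nat.cast (R := ℤ)) (card_isBalancedAt_add (w := w) (ι := ι) m)
  push_cast at this
  linarith

end Levels

theorem card_filter_card_eq_choose {β : Type*} [Fintype β] [DecidableEq β] (k : ℕ) :
    #{r : β → Bool | #{j | r j = true} = k} = (Fintype.card β).choose k := by
  rw [← card_univ, ← card_powersetCard]
  refine card_nbij' (fun r ↦ ({j | r j = true} : Finset β)) (fun s j ↦ decide (j ∈ s)) ?_ ?_ ?_ ?_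
  · intro r hr
    simpa using hr
  · intro s hs
    simpa using (mem_powersetCard.1 hs).2
  · intro r _
    funext j
    simp
  · intro s _
    ext j
    simp

theorem almostBalanced_count (a b : ℕ) (ha : 0 < a) (hb : 0 < b) :
    (Nat.card {M : Fin a → Fin b → Bool // AlmostBalanced M} : ℤ) =
      ∑ i ∈ Finset.range b, ((b.choose i : ℤ) + (b.choose (i+1) : ℤ)) ^ a -
        ∑ i ∈ Finset.Ico 1 b, (b.choose i : ℤ) ^ a := by
  classical
  have : Nonempty (Fin a) := ⟨⟨0, ha⟩⟩
  obtain ⟨c, rfl⟩ : ∃ c, b = c + 1 := ⟨b - 1, by omega⟩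
  have hcount := card_forall_le_add_one_eq_sum (ι := Fin a)
    (w := fun r : Fin (c + 1) → Bool ↦ #{j | r j = true})
    fun _ ↦ card_le_univ _ |>.trans_eq (Fintype.card_fin _)
  simp only [card_filter_card_eq_choose, Fintype.card_fin] at hcount
  rw [Nat.card_eq_fintype_card, Fintype.card_subtype]
  trans ∑ m ∈ range (c + 1 + 1),
    ((((c + 1).choose m : ℤ) + (c + 1).choose (m + 1)) ^ a - ((c + 1).choose (m + 1) : ℤ) ^ a)
  · convert hcount using 4
    exact Iff.rfl
  rw [sum_range_succ, sum_sub_distrib, sum_range_succ (fun m ↦ ((c + 1).choose (m + 1) : ℤ) ^ a),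
    sum_Ico_eq_sum_range]
  simp [add_comm 1, zero_pow ha.ne']
  ring
end

section
/- The number of valid placements in an n×n Sudoku grid with square blocks of side √n equals ((√n)!)^(2√n). -/
/-- A valid placement on the `ab × ab` Sudoku grid with `a × b` blocks:
exactly one cell in each row, each column, and each block. -/
def IsValidPlacement (a b : ℕ) (P : Finset (Fin (a*b) × Fin (a*b))) : Prop :=
  (∀ r : Fin (a*b), (P.filter (fun p => p.1 = r)).card = 1) ∧
  (∀ c : Fin (a*b), (P.filter (fun p => p.2 = c)).card = 1) ∧
  (∀ (i : Fin b) (j : Fin a),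
    (P.filter (fun p => p.1.val / a = i.val ∧ p.2.val / b = j.val)).card = 1)


def mk2 {m : ℕ} (i s : Fin m) : Fin (m*m) :=
  ⟨m * i.val + s.val, by
    have h1 := i.isLt; have h2 := s.isLt
    calc m * i.val + s.val < m * i.val + m := by omega
    _ = m * (i.val + 1) := by ring
    _ ≤ m * m := Nat.mul_le_mul_left m (by omega)⟩

lemma mk2_div {m : ℕ} (i s : Fin m) : (mk2 i s).val / m = i.val := by
  have hm : 0 < m := i.pos
  simp [mk2, Nat.mul_add_div hm, Nat.div_eq_of_lt s.isLt]

lemma mk2_mod {m : ℕ} (i s : Fin m) : (mk2 i s).val % m = s.val := by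
  simp [mk2, Nat.mul_add_mod, Nat.mod_eq_of_lt s.isLt]

lemma mk2_inj {m : ℕ} {i s i' s' : Fin m} (h : mk2 i s = mk2 i' s') :
    i = i' ∧ s = s' := by
  constructor
  · have := congrArg (fun r : Fin (m*m) => r.val / m) h
    simpa [mk2_div] using Fin.ext (by simpa [mk2_div] using this)
  · have := congrArg (fun r : Fin (m*m) => r.val % m) h
    exact Fin.ext (by simpa [mk2_mod] using this)

lemma mk2_surj {m : ℕ} (r : Fin (m*m)) :
    ∃ i s : Fin m, r = mk2 i s := by
  have hm : 0 < m := by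
    rcases Nat.eq_zero_or_pos m with h | h
    · exact absurd r.isLt (by simp [h])
    · exact h
  have hdiv : r.val / m < m := by
    have := r.isLt
    exact Nat.div_lt_of_lt_mul (by omega)
  refine ⟨⟨r.val / m, hdiv⟩, ⟨r.val % m, Nat.mod_lt _ hm⟩, ?_⟩
  apply Fin.ext
  simp [mk2, Nat.div_add_mod]


def plc (m : ℕ) (fg : (Fin m → Equiv.Perm (Fin m)) × (Fin m → Equiv.Perm (Fin m))) :
    Finset (Fin (m*m) × Fin (m*m)) :=
  Finset.image (fun ij : Fin m × Fin m =>
    (mk2 ij.1 (fg.1 ij.1 ij.2), mk2 ij.2 (fg.2 ij.2 ij.1))) Finset.univ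

lemma plc_mem {m : ℕ} (fg : (Fin m → Equiv.Perm (Fin m)) × (Fin m → Equiv.Perm (Fin m)))
    (p : Fin (m*m) × Fin (m*m)) :
    p ∈ plc m fg ↔ ∃ i j : Fin m,
      p = (mk2 i (fg.1 i j), mk2 j (fg.2 j i)) := by
  simp only [plc, Finset.mem_image, Finset.mem_univ, true_and, Prod.exists]
  constructor
  · rintro ⟨i, j, h⟩; exact ⟨i, j, h.symm⟩
  · rintro ⟨i, j, h⟩; exact ⟨i, j, h.symm⟩

lemma plc_valid {m : ℕ} (fg : (Fin m → Equiv.Perm (Fin m)) × (Fin m → Equiv.Perm (Fin m))) :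
    IsValidPlacement m m (plc m fg) := by
  obtain ⟨f, g⟩ := fg
  refine ⟨?_, ?_, ?_⟩
  · intro r
    obtain ⟨i, s, rfl⟩ := mk2_surj r
    rw [Finset.card_eq_one]
    refine ⟨(mk2 i s, mk2 ((f i).symm s) (g ((f i).symm s) i)), ?_⟩
    ext p
    simp only [Finset.mem_filter, Finset.mem_singleton, plc_mem]
    constructor
    · rintro ⟨⟨i', j', rfl⟩, h2⟩
      simp only at h2
      obtain ⟨rfl, rfl⟩ := mk2_inj h2
      have : j' = (f i').symm (f i' j') := by simp
      rw [Prod.ext_iff]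
      constructor
      · simp
      · congr 1 <;> simp
    · rintro rfl
      refine ⟨⟨i, (f i).symm s, ?_⟩, rfl⟩
      simp
  · intro c
    obtain ⟨j, t, rfl⟩ := mk2_surj c
    rw [Finset.card_eq_one]
    refine ⟨(mk2 ((g j).symm t) (f ((g j).symm t) j), mk2 j t), ?_⟩
    ext p
    simp only [Finset.mem_filter, Finset.mem_singleton, plc_mem]
    constructor
    · rintro ⟨⟨i', j', rfl⟩, h2⟩
      simp only at h2
      obtain ⟨rfl, rfl⟩ := mk2_inj h2
      rw [Prod.ext_iff]
      constructor
      · congr 1 <;> simp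
      · simp
    · rintro rfl
      refine ⟨⟨(g j).symm t, j, ?_⟩, rfl⟩
      simp
  · intro i j
    rw [Finset.card_eq_one]
    refine ⟨(mk2 i (f i j), mk2 j (g j i)), ?_⟩
    ext p
    simp only [Finset.mem_filter, Finset.mem_singleton, plc_mem]
    constructor
    · rintro ⟨⟨i', j', rfl⟩, h2⟩
      simp only [mk2_div] at h2
      obtain ⟨h1, h2⟩ := h2
      have : i' = i := Fin.ext h1
      subst this
      have : j' = j := Fin.ext h2
      subst this
      rfl
    · rintro rfl
      exact ⟨⟨i, j, rfl⟩, by simp [mk2_div]⟩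

lemma plc_inj {m : ℕ} : Function.Injective (plc m) := by
  rintro ⟨f, g⟩ ⟨f', g'⟩ h
  have key : ∀ i j : Fin m, f i j = f' i j ∧ g j i = g' j i := by
    intro i j
    have hmem : ((mk2 i (f i j) : Fin (m*m)), (mk2 j (g j i) : Fin (m*m))) ∈ plc m (f', g') := by
      rw [← h, plc_mem]; exact ⟨i, j, rfl⟩
    rw [plc_mem] at hmem
    obtain ⟨i', j', hp⟩ := hmem
    rw [Prod.ext_iff] at hp
    obtain ⟨h1, h2⟩ := hp
    obtain ⟨hi, hs⟩ := mk2_inj h1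
    obtain ⟨hj, ht⟩ := mk2_inj h2
    subst hi; subst hj
    exact ⟨hs, ht⟩
  have hf : f = f' := by
    funext i; ext j; exact congrArg Fin.val (key i j).1
  have hg : g = g' := by
    funext j; ext i; exact congrArg Fin.val (key i j).2
  rw [Prod.ext_iff]; exact ⟨hf, hg⟩

lemma plc_card {m : ℕ} (fg : (Fin m → Equiv.Perm (Fin m)) × (Fin m → Equiv.Perm (Fin m))) :
    (plc m fg).card = m * m := by
  rw [plc, Finset.card_image_of_injective _ ?inj, Finset.card_univ]
  · simp
  case inj =>
    rintro ⟨i, j⟩ ⟨i', j'⟩ h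
    rw [Prod.ext_iff] at h
    obtain ⟨hi, _⟩ := mk2_inj h.1
    obtain ⟨hj, _⟩ := mk2_inj h.2
    simp only at hi hj
    simp [Prod.ext_iff, hi, hj]

lemma valid_card {m : ℕ} {P : Finset (Fin (m*m) × Fin (m*m))}
    (hP : IsValidPlacement m m P) : P.card = m * m := by
  have := Finset.card_eq_sum_card_fiberwise (f := fun p : Fin (m*m) × Fin (m*m) => p.1)
    (s := P) (t := Finset.univ) (fun x _ => Finset.mem_univ _)
  rw [this]
  rw [Finset.sum_congr rfl (fun r _ => hP.1 r)]
  simp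

lemma plc_surj {m : ℕ} (hm : 0 < m) {P : Finset (Fin (m*m) × Fin (m*m))}
    (hP : IsValidPlacement m m P) : ∃ fg, plc m fg = P := by
  -- the unique cell in each block
  have hcell : ∀ i j : Fin m, ∃ p : Fin (m*m) × Fin (m*m),
      P.filter (fun p => p.1.val / m = i.val ∧ p.2.val / m = j.val) = {p} :=
    fun i j => Finset.card_eq_one.mp (hP.2.2 i j)
  choose C hC using hcell
  have hCmem : ∀ i j, C i j ∈ P ∧ (C i j).1.val / m = i.val ∧ (C i j).2.val / m = j.val := by
    intro i j
    have : C i j ∈ P.filter (fun p => p.1.val / m = i.val ∧ p.2.val / m = j.val) := by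
      rw [hC]; exact Finset.mem_singleton_self _
    simpa using this
  -- offsets
  set s : Fin m → Fin m → Fin m := fun i j => ⟨(C i j).1.val % m, Nat.mod_lt _ hm⟩ with hs
  set t : Fin m → Fin m → Fin m := fun i j => ⟨(C i j).2.val % m, Nat.mod_lt _ hm⟩ with ht
  have hrow : ∀ i j, (C i j).1 = mk2 i (s i j) := by
    intro i j
    apply Fin.ext
    have h := (hCmem i j).2.1
    simp only [mk2, hs]
    conv_lhs => rw [← Nat.div_add_mod (C i j).1.val m]
    rw [h]
  have hcol : ∀ i j, (C i j).2 = mk2 j (t i j) := by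
    intro i j
    apply Fin.ext
    have h := (hCmem i j).2.2
    simp only [mk2, ht]
    conv_lhs => rw [← Nat.div_add_mod (C i j).2.val m]
    rw [h]
  -- injectivity of offsets
  have hsinj : ∀ i, Function.Injective (s i) := by
    intro i j1 j2 h
    have h1 : C i j1 ∈ P.filter (fun p => p.1 = mk2 i (s i j1)) := by
      simp [Finset.mem_filter, (hCmem i j1).1, hrow]
    have h2 : C i j2 ∈ P.filter (fun p => p.1 = mk2 i (s i j1)) := by
      simp [Finset.mem_filter, (hCmem i j2).1, hrow, h]
    have hcard := hP.1 (mk2 i (s i j1))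
    rw [Finset.card_eq_one] at hcard
    obtain ⟨a, ha⟩ := hcard
    rw [ha, Finset.mem_singleton] at h1 h2
    have : C i j1 = C i j2 := h1.trans h2.symm
    have hj := (hCmem i j1).2.2
    rw [this, (hCmem i j2).2.2] at hj
    exact Fin.ext hj.symm
  have htinj : ∀ j, Function.Injective (fun i => t i j) := by
    intro j i1 i2 h
    simp only at h
    have h1 : C i1 j ∈ P.filter (fun p => p.2 = mk2 j (t i1 j)) := by
      simp [Finset.mem_filter, (hCmem i1 j).1, hcol]
    have h2 : C i2 j ∈ P.filter (fun p => p.2 = mk2 j (t i1 j)) := by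
      simp [Finset.mem_filter, (hCmem i2 j).1, hcol, h]
    have hcard := hP.2.1 (mk2 j (t i1 j))
    rw [Finset.card_eq_one] at hcard
    obtain ⟨a, ha⟩ := hcard
    rw [ha, Finset.mem_singleton] at h1 h2
    have : C i1 j = C i2 j := h1.trans h2.symm
    have hi := (hCmem i1 j).2.1
    rw [this, (hCmem i2 j).2.1] at hi
    exact Fin.ext hi.symm
  -- build permutations
  set f : Fin m → Equiv.Perm (Fin m) := fun i =>
    Equiv.ofBijective (s i) (Finite.injective_iff_bijective.mp (hsinj i)) with hf
  set g : Fin m → Equiv.Perm (Fin m) := fun j =>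
    Equiv.ofBijective (fun i => t i j) (Finite.injective_iff_bijective.mp (htinj j)) with hg
  refine ⟨(f, g), ?_⟩
  have hsub : plc m (f, g) ⊆ P := by
    intro p hp
    rw [plc_mem] at hp
    obtain ⟨i, j, rfl⟩ := hp
    have : ((mk2 i (f i j) : Fin (m*m)), (mk2 j (g j i) : Fin (m*m))) = C i j := by
      have h1 : f i j = s i j := rfl
      have h2 : g j i = t i j := rfl
      rw [h1, h2, Prod.ext_iff]
      exact ⟨(hrow i j).symm, (hcol i j).symm⟩
    rw [this]
    exact (hCmem i j).1
  exact Finset.eq_of_subset_of_card_le hsub (by rw [valid_card hP, plc_card])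

theorem count_valid_placements (m : ℕ) (hm : 0 < m) :
    Nat.card {P : Finset (Fin (m*m) × Fin (m*m)) // IsValidPlacement m m P} =
      (Nat.factorial m) ^ (2 * m) := by
  have hb : Function.Bijective (fun fg => (⟨plc m fg, plc_valid fg⟩ :
      {P : Finset (Fin (m*m) × Fin (m*m)) // IsValidPlacement m m P})) := by
    constructor
    · intro a b h
      exact plc_inj (congrArg Subtype.val h)
    · rintro ⟨P, hP⟩
      obtain ⟨fg, hfg⟩ := plc_surj hm hP
      exact ⟨fg, Subtype.ext hfg⟩
  rw [← Nat.card_eq_of_bijective _ hb]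
  simp only [Nat.card_eq_fintype_card, Fintype.card_prod, Fintype.card_fun,
    Fintype.card_perm, Fintype.card_fin]
  rw [two_mul, pow_add]
end

section
/- For m ≥ 2, the number of valid placements in an m²×m² Sudoku grid with m×m blocks, namely (m!)^(2m), is strictly greater than the number of m×m almost-balanced 0–1 matrices, A(m,m) = ∑_{i=0}^{m-1} (C(m,i)+C(m,i+1))^m − ∑_{i=1}^{m-1} C(m,i)^m. -/
/-!
Each of the `m` summands of the first sum is at most `(2 ^ m) ^ m`, because two binomial
coefficients of the same row add up to at most `2 ^ m`; discarding the subtracted sum, the count is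
therefore below `2 ^ m * (2 ^ m) ^ m = (2 ^ (m + 1)) ^ m`. Since `m ! ≥ 2 ^ (m - 1)`, for `m ≥ 3` this
is at most `((m !) ^ 2) ^ m`. The case `m = 2` (`14 < 16`) is checked directly.
-/

open Finset

namespace Nat

theorem choose_add_choose_succ_le_two_pow (n k : ℕ) : n.choose k + n.choose (k + 1) ≤ 2 ^ n := by
  obtain hk | hk := lt_or_ge n k
  · simp [choose_eq_zero_of_lt hk, choose_eq_zero_of_lt (hk.trans (lt_succ_self k))]
  calc n.choose k + n.choose (k + 1) ≤ ∑ j ∈ range (n + 2), n.choose j :=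
        add_le_sum (fun _ _ => Nat.zero_le _) (by simp; omega) (by simp; omega) (by omega)
    _ = 2 ^ n := by
        rw [sum_range_succ, choose_eq_zero_of_lt (Nat.lt_succ_self n), sum_range_choose, add_zero]

theorem two_pow_succ_le_factorial_sq {n : ℕ} (hn : 3 ≤ n) : 2 ^ (n + 1) ≤ (n !) ^ 2 := by
  obtain ⟨k, rfl⟩ : ∃ k, n = k + 1 := ⟨n - 1, by omega⟩
  have hfact : 2 ^ k ≤ (k + 1)! := by
    simpa [add_comm] using factorial_mul_pow_le_factorial (m := 1) (n := k)
  calc 2 ^ (k + 1 + 1) ≤ 2 ^ (k * 2) := Nat.pow_le_pow_right two_pos (by omega)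
    _ = (2 ^ k) ^ 2 := pow_mul 2 k 2
    _ ≤ ((k + 1)!) ^ 2 := Nat.pow_le_pow_left hfact 2

theorem sum_pow_choose_add_choose_succ_lt {m : ℕ} (hm : 3 ≤ m) :
    ∑ i ∈ range m, (m.choose i + m.choose (i + 1)) ^ m < (m !) ^ (2 * m) := by
  calc ∑ i ∈ range m, (m.choose i + m.choose (i + 1)) ^ m ≤ m * (2 ^ m) ^ m := by
        simpa using sum_le_card_nsmul (range m) _ _
          fun i _ => Nat.pow_le_pow_left (choose_add_choose_succ_le_two_pow m i) m
    _ < 2 ^ m * (2 ^ m) ^ m := Nat.mul_lt_mul_of_pos_right m.lt_two_pow_self (by positivity)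
    _ = (2 ^ (m + 1)) ^ m := by ring
    _ ≤ ((m !) ^ 2) ^ m := Nat.pow_le_pow_left (two_pow_succ_le_factorial_sq hm) m
    _ = (m !) ^ (2 * m) := (pow_mul _ 2 m).symm

end Nat

theorem placements_gt_matrices (m : ℕ) (hm : 2 ≤ m) :
    (∑ i ∈ Finset.range m, ((m.choose i : ℤ) + (m.choose (i+1) : ℤ)) ^ m -
        ∑ i ∈ Finset.Ico 1 m, (m.choose i : ℤ) ^ m) <
      (Nat.factorial m : ℤ) ^ (2 * m) := by
  obtain rfl | hm3 := hm.eq_or_lt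
  · decide
  have hsub : 0 ≤ ∑ i ∈ Finset.Ico 1 m, (m.choose i : ℤ) ^ m := sum_nonneg fun _ _ => by positivity
  have hpairs : ∑ i ∈ Finset.range m, ((m.choose i : ℤ) + (m.choose (i+1) : ℤ)) ^ m <
      (Nat.factorial m : ℤ) ^ (2 * m) := by
    exact_mod_cast Nat.sum_pow_choose_add_choose_succ_lt hm3
  linarith
end

section
/- For n = m², the number of m×m almost-balanced 0–1 matrices is o(2^n); more precisely, A(m,m) ≤ m · (2·C(m,⌈m/2⌉))^m, and (2·C(m,⌈m/2⌉))^m = 2^{n − Ω(√n · log n)}. -/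
/-- The number of `m × m` almost-balanced 0-1 matrices, via the summation formula. -/
def A (m : ℕ) : ℤ :=
  ∑ i ∈ Finset.range m, ((m.choose i : ℤ) + (m.choose (i+1) : ℤ)) ^ m -
    ∑ i ∈ Finset.Ico 1 m, (m.choose i : ℤ) ^ m

/-!
Every term of the first sum defining `A m` is at most `B ^ m` with `B = 2 * C(m, ⌈m/2⌉)`, and the
subtracted sum is nonnegative, so `A m ≤ m * B ^ m`. The central binomial coefficient satisfies
`C(2k, k) ^ 2 * (k + 1) ≤ 16 ^ k`, whence `C(m, ⌈m/2⌉) ^ 2 * m ≤ 2 * 4 ^ m` and, for `m ≥ 64`,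
`B ^ 4 * m ≤ 16 ^ m`, i.e. `B ≤ 2 ^ m / m ^ (1/4)`. Raising this to the `m`-th power gives
`B ^ m ≤ 2 ^ (m² - (m log m) / (4 log 2))`, and already `2 * B ≤ 2 ^ m` gives
`A m ≤ (m / 2 ^ m) * 2 ^ (m²)`.
-/

open Filter Asymptotics Topology

namespace Nat

theorem centralBinom_sq_mul_succ_le (k : ℕ) : centralBinom k ^ 2 * (k + 1) ≤ 16 ^ k := by
  induction k with
  | zero => simp
  | succ k ih =>
    refine Nat.le_of_mul_le_mul_right ?_ (by positivity : 0 < (k + 1) ^ 3)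
    calc centralBinom (k + 1) ^ 2 * (k + 1 + 1) * (k + 1) ^ 3
        = ((k + 1) * centralBinom (k + 1)) ^ 2 * ((k + 2) * (k + 1)) := by ring
      _ = (2 * (2 * k + 1) * centralBinom k) ^ 2 * ((k + 2) * (k + 1)) := by
          rw [succ_mul_centralBinom_succ]
      _ = centralBinom k ^ 2 * (k + 1) * (4 * (2 * k + 1) ^ 2 * (k + 2)) := by ring
      _ ≤ 16 ^ k * (16 * (k + 1) ^ 3) := Nat.mul_le_mul ih (by nlinarith)
      _ = 16 ^ (k + 1) * (k + 1) ^ 3 := by ring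

theorem choose_le_choose_succ_div_two (m i : ℕ) : m.choose i ≤ m.choose ((m + 1) / 2) := by
  rw [← choose_symm (by omega : (m + 1) / 2 ≤ m), show m - (m + 1) / 2 = m / 2 by omega]
  exact choose_le_middle i m

theorem choose_succ_div_two_sq_mul_le (m : ℕ) : m.choose ((m + 1) / 2) ^ 2 * m ≤ 2 * 4 ^ m := by
  have h16 : (16 : ℕ) = 4 ^ 2 := rfl
  obtain ⟨k, rfl | rfl⟩ := even_or_odd' m
  · rw [show (2 * k + 1) / 2 = k by omega, ← centralBinom_eq_two_mul_choose, pow_mul, ← h16]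
    calc centralBinom k ^ 2 * (2 * k) ≤ 2 * (centralBinom k ^ 2 * (k + 1)) := by
          nlinarith [Nat.zero_le (centralBinom k ^ 2)]
      _ ≤ 2 * 16 ^ k := Nat.mul_le_mul_left 2 (centralBinom_sq_mul_succ_le k)
  · have hmid : (2 * k + 1).choose (k + 1) ≤ 2 * centralBinom k := by
      rw [choose_succ_succ, centralBinom_eq_two_mul_choose]
      linarith [choose_le_centralBinom (k + 1) k, centralBinom_eq_two_mul_choose k]
    rw [show (2 * k + 1 + 1) / 2 = k + 1 by omega, pow_succ 4, pow_mul, ← h16]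
    calc (2 * k + 1).choose (k + 1) ^ 2 * (2 * k + 1)
        ≤ (2 * centralBinom k) ^ 2 * (2 * (k + 1)) := by gcongr; omega
      _ = 8 * (centralBinom k ^ 2 * (k + 1)) := by ring
      _ ≤ 8 * 16 ^ k := Nat.mul_le_mul_left 8 (centralBinom_sq_mul_succ_le k)
      _ = 2 * (16 ^ k * 4) := by ring

theorem two_mul_choose_succ_div_two_pow_four_mul_le {m : ℕ} (hm : 64 ≤ m) :
    (2 * m.choose ((m + 1) / 2)) ^ 4 * m ≤ 16 ^ m := by
  refine Nat.le_of_mul_le_mul_right ?_ (by omega : 0 < m)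
  calc (2 * m.choose ((m + 1) / 2)) ^ 4 * m * m = 16 * (m.choose ((m + 1) / 2) ^ 2 * m) ^ 2 := by
        ring
    _ ≤ 16 * (2 * 4 ^ m) ^ 2 :=
        Nat.mul_le_mul_left 16 (Nat.pow_le_pow_left (choose_succ_div_two_sq_mul_le m) 2)
    _ = 64 * 16 ^ m := by rw [mul_pow, ← pow_mul, mul_comm m, pow_mul]; ring
    _ ≤ 16 ^ m * m := by rw [mul_comm]; gcongr

theorem two_mul_two_mul_choose_succ_div_two_le {m : ℕ} (hm : 64 ≤ m) :
    2 * (2 * m.choose ((m + 1) / 2)) ≤ 2 ^ m := by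
  refine (Nat.pow_le_pow_iff_left (by norm_num : 4 ≠ 0)).mp ?_
  calc (2 * (2 * m.choose ((m + 1) / 2))) ^ 4 = (2 * m.choose ((m + 1) / 2)) ^ 4 * 16 := by ring
    _ ≤ (2 * m.choose ((m + 1) / 2)) ^ 4 * m := by gcongr; omega
    _ ≤ 16 ^ m := two_mul_choose_succ_div_two_pow_four_mul_le hm
    _ = (2 ^ m) ^ 4 := by rw [← pow_mul, mul_comm, pow_mul]; norm_num

end Nat

theorem A_nonneg (m : ℕ) : 0 ≤ A m := by
  have hsub : Finset.Ico 1 m ⊆ Finset.range m := fun i hi => by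
    simp only [Finset.mem_Ico, Finset.mem_range] at hi ⊢; omega
  rw [A, sub_nonneg]
  calc ∑ i ∈ Finset.Ico 1 m, (m.choose i : ℤ) ^ m
      ≤ ∑ i ∈ Finset.Ico 1 m, ((m.choose i : ℤ) + (m.choose (i + 1) : ℤ)) ^ m :=
        Finset.sum_le_sum fun i _ => by gcongr; omega
    _ ≤ _ := Finset.sum_le_sum_of_subset_of_nonneg hsub fun i _ _ => by positivity

theorem A_le_mul_pow (m : ℕ) : A m ≤ (m : ℤ) * ((2 * (m.choose ((m + 1) / 2)) : ℕ) : ℤ) ^ m := by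
  have hterm (i : ℕ) :
      ((m.choose i : ℤ) + (m.choose (i + 1) : ℤ)) ^ m ≤
        ((2 * m.choose ((m + 1) / 2) : ℕ) : ℤ) ^ m := by
    have hi := Nat.choose_le_choose_succ_div_two m i
    have hi' := Nat.choose_le_choose_succ_div_two m (i + 1)
    gcongr
    push_cast
    omega
  have hfirst := Finset.sum_le_sum fun i (_ : i ∈ Finset.range m) => hterm i
  have hsecond : 0 ≤ ∑ i ∈ Finset.Ico 1 m, (m.choose i : ℤ) ^ m :=
    Finset.sum_nonneg fun i _ => by positivity
  rw [Finset.sum_const, Finset.card_range, nsmul_eq_mul] at hfirst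
  rw [A]
  linarith

theorem A_mul_two_pow_le {m : ℕ} (hm : 64 ≤ m) : A m * 2 ^ m ≤ m * 2 ^ (m * m) := by
  have hbase : (2 * ((2 * m.choose ((m + 1) / 2) : ℕ) : ℤ)) ^ m ≤ (2 ^ m) ^ m := by
    exact_mod_cast Nat.pow_le_pow_left (Nat.two_mul_two_mul_choose_succ_div_two_le hm) m
  calc A m * 2 ^ m ≤ (m : ℤ) * ((2 * (m.choose ((m + 1) / 2)) : ℕ) : ℤ) ^ m * 2 ^ m := by
        gcongr; exact A_le_mul_pow m
    _ = m * (2 * ((2 * m.choose ((m + 1) / 2) : ℕ) : ℤ)) ^ m := by rw [mul_pow]; ring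
    _ ≤ m * 2 ^ (m * m) := by rw [pow_mul]; gcongr

theorem A_isLittleO : (fun m : ℕ => (A m : ℝ)) =o[atTop] fun m : ℕ => (2 : ℝ) ^ (m * m) := by
  rw [isLittleO_iff_tendsto fun m h => absurd h (by positivity)]
  have hlim : Tendsto (fun m : ℕ => (m : ℝ) / 2 ^ m) atTop (𝓝 0) := by
    simpa using tendsto_pow_const_div_const_pow_of_one_lt 1 one_lt_two
  refine tendsto_of_tendsto_of_tendsto_of_le_of_le' tendsto_const_nhds hlim
    (Eventually.of_forall fun m => div_nonneg (by exact_mod_cast A_nonneg m) (by positivity)) ?_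
  filter_upwards [eventually_ge_atTop 64] with m hm
  rw [div_le_div_iff₀ (by positivity) (by positivity)]
  exact_mod_cast A_mul_two_pow_le hm

theorem two_rpow_sub_eq_div {m : ℕ} (hm : 0 < m) :
    (2 : ℝ) ^ ((m * m : ℕ) -
        1 / (8 * Real.log 2) * Real.sqrt ((m : ℝ) * m) * Real.log ((m : ℝ) * m)) =
      2 ^ (m * m) / (m : ℝ) ^ ((m : ℝ) / 4) := by
  have hm' : (0 : ℝ) < m := by exact_mod_cast hm
  have hexp : 1 / (8 * Real.log 2) * Real.sqrt ((m : ℝ) * m) * Real.log ((m : ℝ) * m)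
      = Real.logb 2 m * (m / 4) := by
    rw [Real.sqrt_mul_self hm'.le, Real.log_mul hm'.ne' hm'.ne', Real.logb]
    field_simp
    ring
  rw [hexp, Real.rpow_sub two_pos, Real.rpow_natCast, Real.rpow_mul zero_le_two,
    Real.rpow_logb two_pos (by norm_num) hm']

theorem two_mul_choose_succ_div_two_pow_le {m : ℕ} (hm : 64 ≤ m) :
    ((2 * (m.choose ((m + 1) / 2)) : ℕ) : ℝ) ^ m ≤ 2 ^ (m * m) / (m : ℝ) ^ ((m : ℝ) / 4) := by
  set B : ℝ := ((2 * (m.choose ((m + 1) / 2)) : ℕ) : ℝ) with hB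
  set t : ℝ := (m : ℝ) ^ ((1 : ℝ) / 4)
  have ht4 : t ^ 4 = m := by
    rw [← Real.rpow_natCast, ← Real.rpow_mul (Nat.cast_nonneg m)]
    norm_num
  have htm : (m : ℝ) ^ ((m : ℝ) / 4) = t ^ m := by
    rw [← Real.rpow_natCast, ← Real.rpow_mul (Nat.cast_nonneg m)]
    ring_nf
  have hBt : B * t ≤ 2 ^ m := by
    refine (pow_le_pow_iff_left₀ (by positivity) (by positivity) (by norm_num : 4 ≠ 0)).mp ?_
    calc (B * t) ^ 4 = B ^ 4 * m := by rw [mul_pow, ht4]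
      _ ≤ 16 ^ m := by rw [hB]; exact_mod_cast Nat.two_mul_choose_succ_div_two_pow_four_mul_le hm
      _ = (2 ^ m) ^ 4 := by rw [← pow_mul, mul_comm, pow_mul]; norm_num
  rw [htm, le_div_iff₀ (by positivity), ← mul_pow, pow_mul]
  exact pow_le_pow_left₀ (by positivity) hBt m

open Filter Asymptotics in
theorem A_little_o :
    ((fun m : ℕ => (A m : ℝ)) =o[atTop] fun m : ℕ => (2 : ℝ) ^ (m * m)) ∧
    (∀ m : ℕ, 0 < m → A m ≤ (m : ℤ) * ((2 * (m.choose ((m+1)/2)) : ℕ) : ℤ) ^ m) ∧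
    (∃ c : ℝ, 0 < c ∧ ∃ N : ℕ, ∀ m : ℕ, N ≤ m →
      ((2 * (m.choose ((m+1)/2)) : ℕ) : ℝ) ^ m ≤
        2 ^ ((m * m : ℕ) - c * Real.sqrt ((m : ℝ) * m) * Real.log ((m : ℝ) * m))) := by
  refine ⟨A_isLittleO, fun m _ => A_le_mul_pow m,
    1 / (8 * Real.log 2), by positivity, 64, fun m hm => ?_⟩
  rw [two_rpow_sub_eq_div (by omega)]
  exact two_mul_choose_succ_div_two_pow_le hm
end

section
/- Let P be a valid placement of an ab×ab Sudoku grid with a×b blocks, contained in a set S of cells, and for 0 ≤ i ≤ ab let M_i be the b×a 0–1 matrix recording which rows of the grid are covered by cells of P lying in the first i columns. Then each M_i is almost-balanced: every row of M_i has either ⌊i/b⌋ or ⌈i/b⌉ nonzeros. -/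
/-- Total number of ones ("count") of a 0-1 matrix. -/
def mcount {a b : ℕ} (M : Fin b → Fin a → Bool) : ℕ :=
  (Finset.univ.filter (fun p : Fin b × Fin a => M p.1 p.2 = true)).card

/-- Grid row corresponding to matrix coefficient `(j, k)`: the `k`-th row in
the `j`-th group of `a` consecutive grid rows. -/
def rowIdx (a b : ℕ) (j : Fin b) (k : Fin a) : Fin (a*b) :=
  ⟨j.val * a + k.val, by
    have hj := j.isLt; have hk := k.isLt
    have h1 : j.val * a + k.val < (j.val + 1) * a := by
      have : (j.val + 1) * a = j.val * a + a := by ring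
      omega
    have h2 : (j.val + 1) * a ≤ b * a := Nat.mul_le_mul_right a hj
    have h3 : a * b = b * a := Nat.mul_comm a b
    omega⟩

/-- Arcs of the graph `G_S` on almost-balanced `b × a` 0-1 matrices: `B` differs
from `A` only by changing coefficient `(j,k)` (grid row `rowIdx a b j k`) from 0
to 1, the count of `B` equals the (1-indexed) column `c.val + 1`, and the cell
`(rowIdx a b j k, c)` belongs to `S`. -/
def GEdge (a b : ℕ) (S : Finset (Fin (a*b) × Fin (a*b)))
    (A B : Fin b → Fin a → Bool) : Prop :=
  AlmostBalanced A ∧ AlmostBalanced B ∧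
  ∃ (j : Fin b) (k : Fin a) (c : Fin (a*b)),
    A j k = false ∧ B j k = true ∧
    (∀ (j' : Fin b) (k' : Fin a), (j', k') ≠ (j, k) → A j' k' = B j' k') ∧
    mcount B = c.val + 1 ∧ (rowIdx a b j k, c) ∈ S
/-- `stepMatrix a b P i` records which grid rows are covered by cells of `P`
lying in the first `i` columns, as a `b × a` 0-1 matrix. -/
def stepMatrix (a b : ℕ) (P : Finset (Fin (a*b) × Fin (a*b))) (i : ℕ) :
    Fin b → Fin a → Bool :=
  fun j k => decide (∃ p ∈ P, p.1 = rowIdx a b j k ∧ p.2.val < i)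

/-
Fix a row group `j`. Every grid row carries exactly one cell of `P`, so row `j` of `M_i` counts
the cells of `P` in group `j` whose column is `< i`. Those cells lie one in each block, i.e. one
in each band of `b` consecutive columns: the `⌊i/b⌋` bands lying entirely below `i` contribute
one cell each, and only the `⌈i/b⌉` bands meeting `[0, i)` can contribute at all.
-/

open Finset

section Counting

variable {α : Type*} (s : Finset α) (g : α → ℕ) {b i : ℕ}

theorem div_le_card_filter_lt (hband : ∀ m < i / b, ∃ x ∈ s, g x / b = m) :
    i / b ≤ #{x ∈ s | g x < i} := by
  calc i / b = #(range (i / b)) := (card_range _).symm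
    _ ≤ #({x ∈ s | g x < i}.image (g · / b)) := by
        refine card_le_card fun m hm => ?_
        obtain ⟨x, hxs, rfl⟩ := hband m (mem_range.mp hm)
        have hx : g x < i := Nat.lt_of_div_lt_div (mem_range.mp hm)
        exact mem_image.mpr ⟨x, mem_filter.mpr ⟨hxs, hx⟩, rfl⟩
    _ ≤ #{x ∈ s | g x < i} := card_image_le

theorem card_filter_lt_le_add_sub_one_div (hb : 0 < b)
    (hband : Set.InjOn (g · / b) s) :
    #{x ∈ s | g x < i} ≤ (i + b - 1) / b := by
  calc #{x ∈ s | g x < i} = #({x ∈ s | g x < i}.image (g · / b)) :=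
        (card_image_of_injOn (hband.mono (coe_subset.mpr (filter_subset _ _)))).symm
    _ ≤ #(range ((i + b - 1) / b)) := by
        refine card_le_card fun m hm => ?_
        obtain ⟨x, hx, rfl⟩ := mem_image.mp hm
        rw [mem_range, Nat.lt_div_iff_mul_lt hb]
        have := Nat.div_mul_le_self (g x) b
        have := (mem_filter.mp hx).2
        omega
    _ = (i + b - 1) / b := card_range _

theorem eq_div_or_eq_add_sub_one_div {c : ℕ} (hb : 0 < b) (hlow : i / b ≤ c)
    (hhigh : c ≤ (i + b - 1) / b) : c = i / b ∨ c = (i + b - 1) / b := by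
  have : (i + b - 1) / b ≤ i / b + 1 := by
    calc (i + b - 1) / b ≤ (i + b) / b := Nat.div_le_div_right (by omega)
      _ = i / b + 1 := Nat.add_div_right i hb
  omega

end Counting

section Grid

variable {a b : ℕ}

theorem rowIdx_injective (j : Fin b) : Function.Injective (rowIdx a b j) := fun k k' h => by
  have := congrArg Fin.val h
  simp only [rowIdx] at this
  exact Fin.ext (by omega)

theorem mem_range_rowIdx_iff {j : Fin b} {r : Fin (a * b)} :
    r ∈ Set.range (rowIdx a b j) ↔ r.val / a = j := by
  constructor
  · rintro ⟨k, rfl⟩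
    simp only [rowIdx]
    rw [Nat.add_comm, Nat.add_mul_div_right _ _ k.pos, Nat.div_eq_of_lt k.isLt, Nat.zero_add]
  · intro h
    have ha : 0 < a := Nat.pos_of_mul_pos_right r.pos
    refine ⟨⟨r.val % a, Nat.mod_lt _ ha⟩, Fin.ext ?_⟩
    simp only [rowIdx, ← h]
    exact Nat.div_add_mod' r.val a

theorem IsValidPlacement.injOn_fst {P : Finset (Fin (a * b) × Fin (a * b))}
    (hP : IsValidPlacement a b P) :
    Set.InjOn Prod.fst (P : Set (Fin (a * b) × Fin (a * b))) := by
  intro p hp q hq hpq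
  obtain ⟨x, hx⟩ := card_eq_one.mp (hP.1 p.1)
  have hp' : p ∈ P.filter (·.1 = p.1) := mem_filter.mpr ⟨hp, rfl⟩
  have hq' : q ∈ P.filter (·.1 = p.1) := mem_filter.mpr ⟨hq, hpq.symm⟩
  rw [hx, mem_singleton] at hp' hq'
  rw [hp', hq']

theorem IsValidPlacement.existsUnique_mem_block {P : Finset (Fin (a * b) × Fin (a * b))}
    (hP : IsValidPlacement a b P) (j : Fin b) (m : Fin a) :
    ∃! p, p ∈ P ∧ p.1.val / a = j ∧ p.2.val / b = m := by
  obtain ⟨x, hx⟩ := card_eq_one.mp (hP.2.2 j m)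
  refine ⟨x, ?_, fun p hp => ?_⟩
  · simpa using (mem_filter.mp (hx ▸ mem_singleton_self x : x ∈ _))
  · have hp' : p ∈ P.filter (fun p => p.1.val / a = j.val ∧ p.2.val / b = m.val) :=
      mem_filter.mpr hp
    rwa [hx, mem_singleton] at hp'

theorem rowCount_stepMatrix {P : Finset (Fin (a * b) × Fin (a * b))}
    (hP : Set.InjOn Prod.fst (P : Set (Fin (a * b) × Fin (a * b)))) (i : ℕ) (j : Fin b) :
    rowCount (stepMatrix a b P i) j = #{p ∈ P | p.1.val / a = j ∧ p.2.val < i} := by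
  calc rowCount (stepMatrix a b P i) j
      = #(({k | ∃ p ∈ P, p.1 = rowIdx a b j k ∧ p.2.val < i} : Finset (Fin a)).image
          (rowIdx a b j)) := by
        rw [card_image_of_injective _ (rowIdx_injective j)]
        simp [rowCount, stepMatrix]
    _ = #({p ∈ P | p.1.val / a = j ∧ p.2.val < i}.image Prod.fst) := by
        congr 1
        ext r
        simp only [mem_image, mem_filter, mem_univ, true_and]
        constructor
        · rintro ⟨k, ⟨p, hp, hpk, hpi⟩, rfl⟩
          exact ⟨p, ⟨hp, mem_range_rowIdx_iff.mp ⟨k, hpk.symm⟩, hpi⟩, hpk⟩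
        · rintro ⟨p, ⟨hp, hpj, hpi⟩, rfl⟩
          obtain ⟨k, hk⟩ := mem_range_rowIdx_iff.mpr hpj
          exact ⟨k, ⟨p, hp, hk.symm, hpi⟩, hk⟩
    _ = #{p ∈ P | p.1.val / a = j ∧ p.2.val < i} :=
        card_image_of_injOn (hP.mono (coe_subset.mpr (filter_subset _ _)))

end Grid

theorem stepMatrix_almost_balanced_general (a b : ℕ)
    (P : Finset (Fin (a*b) × Fin (a*b)))
    (hP : IsValidPlacement a b P) :
    ∀ i : ℕ, i ≤ a * b → ∀ j : Fin b,
      rowCount (stepMatrix a b P i) j = i / b ∨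
      rowCount (stepMatrix a b P i) j = (i + b - 1) / b := by
  intro i hi j
  have hb : 0 < b := j.pos
  rw [rowCount_stepMatrix hP.injOn_fst, ← filter_filter]
  apply eq_div_or_eq_add_sub_one_div hb
  · refine div_le_card_filter_lt _ _ fun m hm => ?_
    have hma : m < a := hm.trans_le (Nat.div_le_of_le_mul (Nat.mul_comm a b ▸ hi))
    obtain ⟨p, ⟨hp, hpj, hpm⟩, -⟩ := hP.existsUnique_mem_block j ⟨m, hma⟩
    exact ⟨p, mem_filter.mpr ⟨hp, hpj⟩, hpm⟩
  · refine card_filter_lt_le_add_sub_one_div _ _ hb fun p hp q hq hpq => ?_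
    rw [mem_coe, mem_filter] at hp hq
    have hpa : p.2.val / b < a := Nat.div_lt_of_lt_mul (Nat.mul_comm a b ▸ p.2.isLt)
    obtain ⟨x, -, hx⟩ := hP.existsUnique_mem_block j ⟨_, hpa⟩
    exact (hx p ⟨hp.1, hp.2, rfl⟩).trans (hx q ⟨hq.1, hq.2, hpq.symm⟩).symm

theorem stepMatrix_almost_balanced (a b : ℕ) (ha : 0 < a) (hb : 0 < b)
    (S : Set (Fin (a*b) × Fin (a*b))) (P : Finset (Fin (a*b) × Fin (a*b)))
    (hP : IsValidPlacement a b P) (hPS : ∀ p ∈ P, p ∈ S) :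
    ∀ i : ℕ, i ≤ a * b → ∀ j : Fin b,
      rowCount (stepMatrix a b P i) j = i / b ∨
      rowCount (stepMatrix a b P i) j = (i + b - 1) / b :=
  stepMatrix_almost_balanced_general a b P hP
end

section
/- The valid placements of an ab×ab Sudoku grid contained in a set S of cells are in one-to-one correspondence with directed paths from the all-zero matrix to the all-one matrix in the graph G_S of almost-balanced matrices; the bijection sends a placement P to the path whose i-th vertex records the set of rows covered by the cells of P in the first i columns. -/
/-!
A placement is the graph of a bijection `τ` from grid rows, indexed by (band, row within the
band), to columns; a path from `0` to `1` switches on one coefficient per step, so it is the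
sequence of threshold matrices `{p | τ p < i}` for the bijection `τ` recording when each
coefficient is switched on, and the step matrices of a placement are exactly these thresholds.
In this common parametrisation the condition "cells in `S`" reads the same on both sides, and
the block condition (every band meets every column band once) is equivalent to all threshold
matrices being almost balanced: if it holds, band `j` has between `i / b` and `i / b + 1` ones
after `i` columns; conversely, after `m * b` columns the `m * b` ones are spread evenly over the
`b` bands, so each band has exactly `m` of them, and each band gets exactly one cell per
column band.
-/

open Finset

namespace Sudoku

variable {a b : ℕ}

lemma bijective_iff_card_filter_eq_one {α β : Type*} [Fintype α] [DecidableEq β]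
    (f : α → β) :
    Function.Bijective f ↔ ∀ y, #{x | f x = y} = 1 := by
  simp only [Function.bijective_iff_existsUnique, Fintype.existsUnique_iff_card_one]

lemma card_filter_val_lt_of_bijective {h : Fin a → Fin a} (hh : Function.Bijective h) (q : ℕ) :
    #{k | (h k : ℕ) < q} = min a q := by
  rw [card_equiv (Equiv.ofBijective h hh) (t := {m : Fin a | (m : ℕ) < q}) (by simp),
    Fin.card_filter_val_lt]

lemma bijective_of_card_filter_val_lt {h : Fin a → Fin a}
    (H : ∀ q ≤ a, #{k | (h k : ℕ) < q} = q) : Function.Bijective h := by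
  refine (bijective_iff_card_filter_eq_one h).2 fun m => ?_
  have hsplit : ({k | (h k : ℕ) < m + 1} : Finset (Fin a)) =
      ({k | (h k : ℕ) < m} : Finset (Fin a)) ∪ ({k | h k = m} : Finset (Fin a)) := by
    ext k; simp only [mem_filter_univ, mem_union, Fin.ext_iff]; omega
  have hdisj : Disjoint ({k | (h k : ℕ) < m} : Finset (Fin a)) ({k | h k = m} : Finset _) :=
    disjoint_filter.2 fun k _ hlt heq => by rw [heq] at hlt; exact lt_irrefl _ hlt
  have := H (m + 1) m.isLt
  rw [hsplit, card_union_of_disjoint hdisj, H m m.isLt.le] at this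
  omega

def rowEquiv (a b : ℕ) : Fin b × Fin a ≃ Fin (a * b) :=
  finProdFinEquiv.trans (finCongr (Nat.mul_comm b a))

@[simp]
lemma rowEquiv_apply (p : Fin b × Fin a) : rowEquiv a b p = rowIdx a b p.1 p.2 :=
  Fin.ext <| by simp [rowEquiv, rowIdx]; ring

lemma rowEquiv_symm_rowIdx (j : Fin b) (k : Fin a) :
    (rowEquiv a b).symm (rowIdx a b j k) = (j, k) :=
  (rowEquiv a b).symm_apply_eq.2 (rowEquiv_apply (j, k)).symm

lemma rowIdx_div (j : Fin b) (k : Fin a) : (rowIdx a b j k : ℕ) / a = j := by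
  change (j * a + k : ℕ) / a = j
  rw [add_comm, Nat.add_mul_div_right _ _ k.pos, Nat.div_eq_of_lt k.isLt, zero_add]

def colBand (c : Fin (a * b)) : Fin a :=
  ⟨c / b, Nat.div_lt_of_lt_mul (Nat.mul_comm a b ▸ c.isLt)⟩

@[simp]
lemma val_colBand (c : Fin (a * b)) : (colBand c : ℕ) = c / b := rfl

lemma colBand_eq_iff {c : Fin (a * b)} {m : Fin a} : colBand c = m ↔ (c : ℕ) / b = m :=
  Fin.ext_iff

def graphOf (τ : Fin b × Fin a → Fin (a * b)) : Finset (Fin (a * b) × Fin (a * b)) :=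
  univ.image fun p => (rowEquiv a b p, τ p)

lemma mem_graphOf {τ : Fin b × Fin a → Fin (a * b)} {q : Fin (a * b) × Fin (a * b)} :
    q ∈ graphOf τ ↔ τ ((rowEquiv a b).symm q.1) = q.2 := by
  simp only [graphOf, mem_image, mem_univ, true_and]
  constructor
  · rintro ⟨p, rfl⟩; exact congrArg τ ((rowEquiv a b).symm_apply_apply p)
  · intro h; exact ⟨(rowEquiv a b).symm q.1, by simp [h]⟩

lemma card_filter_graphOf (τ : Fin b × Fin a → Fin (a * b))
    (r : Fin (a * b) × Fin (a * b) → Prop) [DecidablePred r] :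
    #{q ∈ graphOf τ | r q} = #{p | r (rowEquiv a b p, τ p)} := by
  rw [graphOf, filter_image, card_image_of_injective]
  exact fun p p' h => (rowEquiv a b).injective (congrArg Prod.fst h)

/-- The block condition, for the placement `graphOf τ`. -/
def OnePerBlock (τ : Fin b × Fin a → Fin (a * b)) : Prop :=
  ∀ j, Function.Bijective fun k => colBand (τ (j, k))

lemma exists_eq_graphOf {P : Finset (Fin (a * b) × Fin (a * b))}
    (hP : ∀ r, #{q ∈ P | q.1 = r} = 1) : ∃ τ, P = graphOf τ := by
  choose x hx using fun r => card_eq_one.1 (hP r)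
  have hx₁ : ∀ r, (x r).1 = r := fun r => (mem_filter.1 ((hx r).ge (mem_singleton_self _))).2
  have hmem : ∀ q, q ∈ P ↔ q = x q.1 := fun q => by
    simpa using (Finset.ext_iff.1 (hx q.1) q)
  refine ⟨fun p => (x (rowEquiv a b p)).2, Finset.ext fun q => ?_⟩
  rw [hmem, mem_graphOf, Equiv.apply_symm_apply, Prod.ext_iff, hx₁]
  simp [eq_comm]

lemma isValidPlacement_graphOf_iff (τ : Fin b × Fin a → Fin (a * b)) :
    IsValidPlacement a b (graphOf τ) ↔ Function.Bijective τ ∧ OnePerBlock τ := by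
  have hrows : ∀ r, #{q ∈ graphOf τ | q.1 = r} = 1 := fun r => by
    rw [card_filter_graphOf]
    exact (bijective_iff_card_filter_eq_one _).1 (rowEquiv a b).bijective r
  have hblock : ∀ (j : Fin b) (m : Fin a),
      #{q ∈ graphOf τ | (q.1 : ℕ) / a = j ∧ (q.2 : ℕ) / b = m} =
        #{k | colBand (τ (j, k)) = m} := fun j m => by
    rw [card_filter_graphOf]
    refine card_nbij' Prod.snd (fun k => (j, k)) ?_ ?_ ?_ ?_ <;>
      simp +contextual [Set.MapsTo, Set.LeftInvOn, Set.RightInvOn, rowIdx_div, colBand_eq_iff,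
        Fin.val_inj]
  simp only [IsValidPlacement, hrows, hblock, card_filter_graphOf, OnePerBlock,
    bijective_iff_card_filter_eq_one, implies_true, true_and]

def thresholdMatrix (τ : Fin b × Fin a → Fin (a * b)) (i : ℕ) : Fin b → Fin a → Bool :=
  fun j k => decide ((τ (j, k) : ℕ) < i)

def thresholdList (τ : Fin b × Fin a → Fin (a * b)) : List (Fin b → Fin a → Bool) :=
  (List.range (a * b + 1)).map (thresholdMatrix τ)

def IsPath (S : Finset (Fin (a * b) × Fin (a * b))) (l : List (Fin b → Fin a → Bool)) : Prop :=
  l.IsChain (GEdge a b S) ∧ l.head? = some (fun _ _ => false) ∧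
    l.getLast? = some (fun _ _ => true)

lemma stepMatrix_graphOf (τ : Fin b × Fin a → Fin (a * b)) :
    stepMatrix a b (graphOf τ) = thresholdMatrix τ := by
  funext i j k
  simp only [stepMatrix, thresholdMatrix, decide_eq_decide]
  constructor
  · rintro ⟨q, hq, hq₁, hi⟩
    rw [mem_graphOf, hq₁, rowEquiv_symm_rowIdx] at hq
    rwa [hq]
  · intro hi
    exact ⟨(rowIdx a b j k, τ (j, k)), by rw [mem_graphOf, rowEquiv_symm_rowIdx], rfl, hi⟩

lemma thresholdList_injective :
    Function.Injective (thresholdList : (Fin b × Fin a → Fin (a * b)) → _) := by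
  intro τ τ' h
  have key : ∀ i ≤ a * b, thresholdMatrix τ i = thresholdMatrix τ' i := fun i hi => by
    simpa [thresholdList, List.getElem?_range, Nat.lt_succ_of_le hi] using
      congrArg (·[i]?) h
  funext ⟨j, k⟩
  have h₁ := congrFun (congrFun (key (τ (j, k) + 1) (τ (j, k)).isLt) j) k
  have h₂ := congrFun (congrFun (key (τ' (j, k) + 1) (τ' (j, k)).isLt) j) k
  simp only [thresholdMatrix, decide_eq_decide] at h₁ h₂
  exact Fin.ext (by omega)

def IsFlip (A B : Fin b → Fin a → Bool) (p : Fin b × Fin a) : Prop :=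
  A p.1 p.2 = false ∧ B p.1 p.2 = true ∧ ∀ j k, (j, k) ≠ p → A j k = B j k

lemma IsFlip.apply_eq_true_iff {A B : Fin b → Fin a → Bool} {p : Fin b × Fin a}
    (h : IsFlip A B p) (j : Fin b) (k : Fin a) :
    B j k = true ↔ A j k = true ∨ (j, k) = p := by
  obtain ⟨hA, hB, hne⟩ := h
  by_cases hp : (j, k) = p
  · subst hp; simp [hB]
  · simp [← hne j k hp, hp]

lemma IsFlip.mcount_eq {A B : Fin b → Fin a → Bool} {p : Fin b × Fin a} (h : IsFlip A B p) :
    mcount B = mcount A + 1 := by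
  have : univ.filter (fun q : Fin b × Fin a => B q.1 q.2 = true) =
      insert p (univ.filter fun q => A q.1 q.2 = true) := by
    ext q; simp [h.apply_eq_true_iff, or_comm]
  rw [mcount, mcount, this, card_insert_of_notMem (by simp [h.1])]

lemma gEdge_iff {S : Finset (Fin (a * b) × Fin (a * b))} {A B : Fin b → Fin a → Bool} :
    GEdge a b S A B ↔ AlmostBalanced A ∧ AlmostBalanced B ∧
      ∃ p, ∃ c : Fin (a * b),
        IsFlip A B p ∧ mcount B = c + 1 ∧ (rowEquiv a b p, c) ∈ S := by
  simp only [GEdge, IsFlip, Prod.exists, rowEquiv_apply, and_assoc]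

@[simp]
lemma rowCount_thresholdMatrix (τ : Fin b × Fin a → Fin (a * b)) (i : ℕ) (j : Fin b) :
    rowCount (thresholdMatrix τ i) j = #{k | (τ (j, k) : ℕ) < i} := by
  simp [rowCount, thresholdMatrix]

lemma mcount_thresholdMatrix (τ : Fin b × Fin a ≃ Fin (a * b)) {i : ℕ} (hi : i ≤ a * b) :
    mcount (thresholdMatrix τ i) = i := by
  rw [mcount, card_equiv τ (t := {t : Fin (a * b) | (t : ℕ) < i}) (by simp [thresholdMatrix]),
    Fin.card_filter_val_lt, min_eq_right hi]

@[simp]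
lemma thresholdMatrix_zero (τ : Fin b × Fin a → Fin (a * b)) :
    thresholdMatrix τ 0 = fun _ _ => false := by
  funext j k; simp [thresholdMatrix]

lemma thresholdMatrix_mul_self (τ : Fin b × Fin a → Fin (a * b)) :
    thresholdMatrix τ (a * b) = fun _ _ => true := by
  funext j k; simp [thresholdMatrix]

lemma almostBalanced_true : AlmostBalanced (fun _ _ => true : Fin b → Fin a → Bool) :=
  fun _ _ => by simp [rowCount]

lemma mcount_true : mcount (fun _ _ => true : Fin b → Fin a → Bool) = a * b := by
  simp [mcount, Nat.mul_comm]

lemma isFlip_thresholdMatrix (τ : Fin b × Fin a ≃ Fin (a * b)) (t : Fin (a * b)) :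
    IsFlip (thresholdMatrix τ t) (thresholdMatrix τ (t + 1)) (τ.symm t) := by
  refine ⟨by simp [thresholdMatrix], by simp [thresholdMatrix], fun j k hne => ?_⟩
  have : (τ (j, k) : ℕ) ≠ t := fun h => hne (τ.eq_symm_apply.2 (Fin.ext h))
  simp only [thresholdMatrix, decide_eq_decide]
  omega

lemma val_eq_of_isFlip_thresholdMatrix {τ : Fin b × Fin a → Fin (a * b)} {t : ℕ}
    {p : Fin b × Fin a} (h : IsFlip (thresholdMatrix τ t) (thresholdMatrix τ (t + 1)) p) :
    (τ p : ℕ) = t := by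
  simp only [IsFlip, thresholdMatrix, Prod.mk.eta, decide_eq_false_iff_not,
    decide_eq_true_eq] at h
  omega

lemma isPath_thresholdList_iff {S : Finset (Fin (a * b) × Fin (a * b))}
    (τ : Fin b × Fin a ≃ Fin (a * b)) :
    IsPath S (thresholdList τ) ↔
      (∀ i ≤ a * b, AlmostBalanced (thresholdMatrix τ i)) ∧ graphOf τ ⊆ S := by
  have hhead : (thresholdList τ).head? = some fun _ _ => false := by
    simp [thresholdList, List.range_succ_eq_map]
  have hlast : (thresholdList τ).getLast? = some fun _ _ => true := by
    rw [thresholdList, List.range_succ, List.map_append, List.map_singleton, List.getLast?_concat,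
      thresholdMatrix_mul_self]
  simp only [IsPath, hhead, hlast, and_true]
  simp only [thresholdList, List.isChain_map, List.isChain_range_succ, gEdge_iff, graphOf,
    image_subset_iff, mem_univ, true_implies]
  constructor
  · intro h
    refine ⟨fun i hi => ?_, fun p => ?_⟩
    · rcases hi.lt_or_eq with hi | rfl
      · exact (h i hi).1
      · rw [thresholdMatrix_mul_self]; exact almostBalanced_true
    · obtain ⟨-, -, q, c, hflip, hc, hS⟩ := h (τ p) (τ p).isLt
      have hq : q = p := τ.injective (Fin.ext (val_eq_of_isFlip_thresholdMatrix hflip))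
      have hc : c = τ p := by
        rw [Nat.succ_eq_add_one, mcount_thresholdMatrix τ (τ p).isLt] at hc
        exact Fin.ext (by omega)
      rwa [hq, hc] at hS
  · rintro ⟨hbal, hS⟩ m hm
    refine ⟨hbal m hm.le, hbal (m + 1) hm, τ.symm ⟨m, hm⟩, ⟨m, hm⟩,
      isFlip_thresholdMatrix τ ⟨m, hm⟩, mcount_thresholdMatrix τ hm, ?_⟩
    simpa using hS (τ.symm ⟨m, hm⟩)

lemma exists_equiv_of_isFlip {M : ℕ → Fin b → Fin a → Bool} (h0 : M 0 = fun _ _ => false)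
    (hM : ∀ t < a * b, ∃ p, IsFlip (M t) (M (t + 1)) p) :
    ∃ τ : Fin b × Fin a ≃ Fin (a * b), ∀ i ≤ a * b, M i = thresholdMatrix τ i := by
  choose x hx using fun t : Fin (a * b) => hM t t.isLt
  have hmem : ∀ i ≤ a * b, ∀ j k,
      M i j k = true ↔ ∃ t : Fin (a * b), t < i ∧ x t = (j, k) := by
    intro i
    induction i with
    | zero => simp [h0]
    | succ i ih =>
      intro hi j k
      rw [(hx ⟨i, hi⟩).apply_eq_true_iff, ih (by omega)]
      constructor
      · rintro (⟨t, ht, h⟩ | h)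
        exacts [⟨t, by omega, h⟩, ⟨⟨i, hi⟩, by simp, h.symm⟩]
      · rintro ⟨t, ht, h⟩
        rcases Nat.lt_succ_iff_lt_or_eq.1 ht with ht | rfl
        exacts [Or.inl ⟨t, ht, h⟩, Or.inr h.symm]
  have hinj : Function.Injective x := by
    have key : ∀ s t : Fin (a * b), s < t → x s ≠ x t := fun s t hst h => by
      have := (hmem t t.isLt.le _ _).2 ⟨s, Fin.lt_def.1 hst, h⟩
      rw [(hx t).1] at this
      exact Bool.false_ne_true this
    intro s t h
    rcases lt_trichotomy s t with hst | hst | hst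
    exacts [absurd h (key s t hst), hst, absurd h.symm (key t s hst)]
  have hbij : Function.Bijective x :=
    (Fintype.bijective_iff_injective_and_card _).2 ⟨hinj, by simp [Nat.mul_comm]⟩
  refine ⟨(Equiv.ofBijective _ hbij).symm, fun i hi =>
    funext fun j => funext fun k => Bool.eq_iff_iff.2 ?_⟩
  rw [hmem i hi, thresholdMatrix, decide_eq_true_iff]
  constructor
  · rintro ⟨t, ht, h⟩
    rwa [(Equiv.ofBijective x hbij).symm_apply_eq.2 h.symm]
  · intro h
    exact ⟨_, h, Equiv.ofBijective_apply_symm_apply _ hbij (j, k)⟩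

lemma exists_eq_thresholdList {S : Finset (Fin (a * b) × Fin (a * b))}
    {l : List (Fin b → Fin a → Bool)} (hl : IsPath S l) :
    ∃ τ : Fin b × Fin a ≃ Fin (a * b), l = thresholdList τ := by
  obtain ⟨hchain, hhead, hlast⟩ := hl
  set M : ℕ → Fin b → Fin a → Bool := fun i => l.getD i fun _ _ => false with hM
  have hne : l ≠ [] := by rintro rfl; simp at hhead
  have hget : ∀ i (hi : i < l.length), M i = l[i] := fun i hi => List.getD_eq_getElem _ _ hi
  have hflip : ∀ i, i + 1 < l.length → ∃ p, IsFlip (M i) (M (i + 1)) p := fun i hi => by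
    obtain ⟨-, -, p, -, hp, -⟩ := gEdge_iff.1 (List.isChain_iff_getElem.1 hchain i hi)
    exact ⟨p, by rwa [hget i (by omega), hget (i + 1) hi]⟩
  have h0 : M 0 = fun _ _ => false := by
    simp [hM, List.getD_eq_getElem?_getD, ← List.head?_eq_getElem?, hhead]
  have hcount : ∀ i < l.length, mcount (M i) = i := by
    intro i
    induction i with
    | zero => intro; simp [h0, mcount]
    | succ i ih =>
      intro hi
      obtain ⟨p, hp⟩ := hflip i hi
      rw [hp.mcount_eq, ih (by omega)]
  have hlen : l.length = a * b + 1 := by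
    have hpos := List.length_pos_iff.2 hne
    have := hcount (l.length - 1) (by omega)
    simp only [hM, List.getD_eq_getElem?_getD, ← List.getLast?_eq_getElem?, hlast,
      Option.getD_some, mcount_true] at this
    omega
  obtain ⟨τ, hτ⟩ := exists_equiv_of_isFlip h0 fun t ht => hflip t (by omega)
  refine ⟨τ, List.ext_getElem (by simp [thresholdList, hlen]) fun i h₁ h₂ => ?_⟩
  rw [← hget i h₁, hτ i (by omega)]
  simp [thresholdList]

lemma eq_of_le_add_one_of_sum_eq {ι : Type*} [Fintype ι] {n : ι → ℕ}
    (hn : ∀ i j, n i ≤ n j + 1) {m : ℕ} (hsum : ∑ i, n i = Fintype.card ι * m) (i : ι) :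
    n i = m := by
  by_contra hne
  rcases Nat.lt_or_gt_of_ne hne with hlt | hgt
  · have : ∑ j, n j < ∑ _j : ι, m :=
      sum_lt_sum (fun j _ => by have := hn j i; omega) ⟨i, mem_univ _, hlt⟩
    simp [hsum] at this
  · have : ∑ _j : ι, m < ∑ j, n j :=
      sum_lt_sum (fun j _ => by have := hn i j; omega) ⟨i, mem_univ _, hgt⟩
    simp [hsum] at this

lemma mcount_eq_sum_rowCount (M : Fin b → Fin a → Bool) : mcount M = ∑ j, rowCount M j := by
  rw [mcount, card_filter, ← univ_product_univ, sum_product]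
  simp only [rowCount, card_filter]

lemma rowCount_thresholdMatrix_mul (τ : Fin b × Fin a → Fin (a * b)) (m : ℕ) (j : Fin b) :
    rowCount (thresholdMatrix τ (m * b)) j = #{k | (colBand (τ (j, k)) : ℕ) < m} := by
  simp only [rowCount_thresholdMatrix, val_colBand, Nat.div_lt_iff_lt_mul j.pos]

lemma almostBalanced_thresholdMatrix {τ : Fin b × Fin a → Fin (a * b)} (hτ : OnePerBlock τ)
    {i : ℕ} (hi : i ≤ a * b) : AlmostBalanced (thresholdMatrix τ i) := by
  suffices h : ∀ j, i / b ≤ rowCount (thresholdMatrix τ i) j ∧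
      rowCount (thresholdMatrix τ i) j ≤ i / b + 1 from
    fun j j' => by have := h j; have := h j'; omega
  intro j
  have hib : i / b ≤ a := Nat.div_le_of_le_mul (Nat.mul_comm a b ▸ hi)
  have hcard := card_filter_val_lt_of_bijective (hτ j)
  rw [rowCount_thresholdMatrix]
  constructor
  · calc i / b = #{k | (colBand (τ (j, k)) : ℕ) < i / b} := by rw [hcard, min_eq_right hib]
      _ ≤ _ := card_le_card <| monotone_filter_right _ fun _ _ => Nat.lt_of_div_lt_div
  · calc _ ≤ #{k | (colBand (τ (j, k)) : ℕ) < i / b + 1} :=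
          card_le_card <| monotone_filter_right _ fun _ _ h =>
            Nat.lt_succ_of_le (Nat.div_le_div_right h.le)
      _ ≤ i / b + 1 := by rw [hcard]; exact min_le_right _ _

lemma onePerBlock_of_almostBalanced (τ : Fin b × Fin a ≃ Fin (a * b))
    (h : ∀ i ≤ a * b, AlmostBalanced (thresholdMatrix τ i)) : OnePerBlock τ := by
  intro j
  refine bijective_of_card_filter_val_lt fun m hm => ?_
  have hmb : m * b ≤ a * b := Nat.mul_le_mul_right b hm
  rw [← rowCount_thresholdMatrix_mul]
  refine eq_of_le_add_one_of_sum_eq (h _ hmb) ?_ j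
  rw [← mcount_eq_sum_rowCount, mcount_thresholdMatrix τ hmb, Fintype.card_fin, Nat.mul_comm]

lemma isValidPlacement_iff {P : Finset (Fin (a * b) × Fin (a * b))} :
    IsValidPlacement a b P ↔
      ∃ τ : Fin b × Fin a ≃ Fin (a * b), OnePerBlock τ ∧ P = graphOf τ := by
  constructor
  · intro hP
    obtain ⟨τ, rfl⟩ := exists_eq_graphOf hP.1
    obtain ⟨hbij, hτ⟩ := (isValidPlacement_graphOf_iff τ).1 hP
    exact ⟨Equiv.ofBijective τ hbij, hτ, rfl⟩
  · rintro ⟨τ, hτ, rfl⟩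
    exact (isValidPlacement_graphOf_iff τ).2 ⟨τ.bijective, hτ⟩

lemma isPath_iff {S : Finset (Fin (a * b) × Fin (a * b))} {l : List (Fin b → Fin a → Bool)} :
    IsPath S l ↔ ∃ τ : Fin b × Fin a ≃ Fin (a * b),
      OnePerBlock τ ∧ graphOf τ ⊆ S ∧ l = thresholdList τ := by
  constructor
  · intro hl
    obtain ⟨τ, rfl⟩ := exists_eq_thresholdList hl
    obtain ⟨hbal, hS⟩ := (isPath_thresholdList_iff τ).1 hl
    exact ⟨τ, onePerBlock_of_almostBalanced τ hbal, hS, rfl⟩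
  · rintro ⟨τ, hτ, hS, rfl⟩
    exact (isPath_thresholdList_iff τ).2
      ⟨fun _ hi => almostBalanced_thresholdMatrix hτ hi, hS⟩

end Sudoku

open Sudoku in
theorem placements_paths_bijection_general (a b : ℕ)
    (S : Finset (Fin (a*b) × Fin (a*b))) :
    ∃ e : {P : Finset (Fin (a*b) × Fin (a*b)) //
            IsValidPlacement a b P ∧ ∀ p ∈ P, p ∈ S} ≃
          {l : List (Fin b → Fin a → Bool) //
            l.Chain' (GEdge a b S) ∧ l.head? = some (fun _ _ => false) ∧
              l.getLast? = some (fun _ _ => true)},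
      ∀ P, (e P).val = (List.range (a * b + 1)).map (fun i => stepMatrix a b P.val i) := by
  have hstep (τ : Fin b × Fin a ≃ Fin (a * b)) :
      (List.range (a * b + 1)).map (stepMatrix a b (graphOf τ)) = thresholdList τ := by
    rw [stepMatrix_graphOf]; rfl
  have hpath (P : {P // IsValidPlacement a b P ∧ P ⊆ S}) :
      IsPath S ((List.range (a * b + 1)).map (stepMatrix a b P.1)) := by
    obtain ⟨P, hP, hPS⟩ := P
    obtain ⟨τ, hτ, rfl⟩ := isValidPlacement_iff.1 hP
    exact hstep τ ▸ isPath_iff.2 ⟨τ, hτ, hPS, rfl⟩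
  refine ⟨Equiv.ofBijective (fun P => ⟨_, hpath P⟩) ⟨?_, ?_⟩, fun _ => rfl⟩
  · rintro ⟨P, hP, _⟩ ⟨Q, hQ, _⟩ h
    obtain ⟨τ, -, rfl⟩ := isValidPlacement_iff.1 hP
    obtain ⟨τ', -, rfl⟩ := isValidPlacement_iff.1 hQ
    have : thresholdList τ = thresholdList τ' := by
      simpa only [hstep] using congrArg Subtype.val h
    exact Subtype.ext (congrArg graphOf (thresholdList_injective this))
  · rintro ⟨l, hl⟩
    obtain ⟨τ, hτ, hS, rfl⟩ := isPath_iff.1 hl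
    exact ⟨⟨graphOf τ, isValidPlacement_iff.2 ⟨τ, hτ, rfl⟩, hS⟩,
      Subtype.ext (hstep τ)⟩

theorem placements_paths_bijection (a b : ℕ) (ha : 0 < a) (hb : 0 < b)
    (S : Finset (Fin (a*b) × Fin (a*b))) :
    ∃ e : {P : Finset (Fin (a*b) × Fin (a*b)) //
            IsValidPlacement a b P ∧ ∀ p ∈ P, p ∈ S} ≃
          {l : List (Fin b → Fin a → Bool) //
            l.Chain' (GEdge a b S) ∧ l.head? = some (fun _ _ => false) ∧
              l.getLast? = some (fun _ _ => true)},
      ∀ P, (e P).val = (List.range (a * b + 1)).map (fun i => stepMatrix a b P.val i) :=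
  placements_paths_bijection_general a b S
end

section
/- If a directed path in G_S goes from the all-zero matrix to the all-one matrix, then the set P of cells labeling its edges is a valid placement contained in S: P has exactly one cell in each column (since counts increase by one per edge), exactly one cell in each row (since each matrix coefficient is changed exactly once from 0 to 1), and exactly one cell in each a×b block (by the almost-balance condition on intermediate matrices). -/
/-!
Along the path every arc raises the count by one, so the `i`-th arc (from `0`) puts its cell in
column `i` and there are `ab` arcs. The matrices increase coefficientwise, so no coefficient is
flipped twice: the `ab` arcs use every grid row once. When the `i`-th arc flips a coefficient in
matrix row `j`, almost balance of both ends forces row `j` to hold exactly `i / b` ones before the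
flip; so two flips in the same matrix row (the same band of grid rows) lie in different bands of
`b` columns, and counting gives exactly one cell per block.
-/

open Finset Function

section

variable {a b : ℕ}

theorem mcount_eq_sum_rowCount (M : Fin b → Fin a → Bool) : mcount M = ∑ i, rowCount M i := by
  rw [mcount, card_filter, Fintype.sum_prod_type]
  simp only [rowCount, card_filter]

theorem mcount_top : mcount (⊤ : Fin b → Fin a → Bool) = b * a := by
  simp [mcount]

theorem mcount_bot : mcount (⊥ : Fin b → Fin a → Bool) = 0 := by
  simp [mcount]

theorem rowCount_mono {A B : Fin b → Fin a → Bool} (h : A ≤ B) (i : Fin b) :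
    rowCount A i ≤ rowCount B i :=
  card_le_card <| monotone_filter_right _ fun k _ => Bool.le_iff_imp.mp (h i k)

theorem rowIdx_val_div (j : Fin b) (k : Fin a) : (rowIdx a b j k).val / a = j := by
  change (j.val * a + k.val) / a = j
  rw [mul_comm, Nat.mul_add_div k.pos, Nat.div_eq_of_lt k.isLt, add_zero]

theorem rowIdx_val_mod (j : Fin b) (k : Fin a) : (rowIdx a b j k).val % a = k := by
  change (j.val * a + k.val) % a = k
  rw [mul_comm, Nat.mul_add_mod, Nat.mod_eq_of_lt k.isLt]

theorem rowIdx_injective_s10 : Injective fun p : Fin b × Fin a => rowIdx a b p.1 p.2 :=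
  fun _ _ h => Prod.ext
    (Fin.ext <| by simpa only [rowIdx_val_div] using congrArg (·.val / a) h)
    (Fin.ext <| by simpa only [rowIdx_val_mod] using congrArg (·.val % a) h)

def IsFlip (A B : Fin b → Fin a → Bool) (p : Fin b × Fin a) : Prop :=
  A p.1 p.2 = false ∧ B p.1 p.2 = true ∧ ∀ j k, (j, k) ≠ p → A j k = B j k

namespace IsFlip

variable {A B A' B' : Fin b → Fin a → Bool} {p p' : Fin b × Fin a}

theorem le (h : IsFlip A B p) : A ≤ B := by
  intro j k
  by_cases hjk : (j, k) = p
  · subst hjk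
    simp [h.1]
  · exact (h.2.2 j k hjk).le

theorem eq_of_false_of_true (h : IsFlip A B p) (h₀ : A p'.1 p'.2 = false)
    (h₁ : B p'.1 p'.2 = true) : p' = p := by
  by_contra hne
  simp [← h.2.2 p'.1 p'.2 hne, h₀] at h₁

theorem not_le_of_isFlip (h : IsFlip A B p) (h' : IsFlip A' B' p) : ¬ B ≤ A' := fun hle =>
  absurd (hle p.1 p.2) (by simp [h.2.1, h'.1])

theorem rowCount_eq (h : IsFlip A B p) (i : Fin b) :
    rowCount B i = rowCount A i + if i = p.1 then 1 else 0 := by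
  by_cases hi : i = p.1
  · subst hi
    have : univ.filter (fun k => B p.1 k = true) =
        insert p.2 (univ.filter fun k => A p.1 k = true) := by
      ext k
      by_cases hk : k = p.2
      · simp [hk, h.2.1]
      · simp [hk, h.2.2 p.1 k (by simp [Prod.ext_iff, hk])]
    rw [rowCount, rowCount, this, card_insert_of_notMem (by simp [h.1]), if_pos rfl]
  · rw [if_neg hi, add_zero, rowCount, rowCount]
    congr 1
    exact filter_congr fun k _ => by rw [h.2.2 i k (by simp [Prod.ext_iff, hi])]

theorem mcount_eq (h : IsFlip A B p) : mcount B = mcount A + 1 := by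
  simp [mcount_eq_sum_rowCount, h.rowCount_eq, sum_add_distrib]

/-- If `B` is almost balanced, the flipped row of `A` has the least count `q`; as `A` is almost
balanced, all its rows have `q` or `q + 1` ones, so `q * b ≤ mcount A < (q + 1) * b`. -/
theorem rowCount_eq_mcount_div (hA : AlmostBalanced A) (hB : AlmostBalanced B)
    (h : IsFlip A B p) : rowCount A p.1 = mcount A / b := by
  set q := rowCount A p.1
  have hge : ∀ i, q ≤ rowCount A i := fun i => by
    by_cases hi : i = p.1
    · rw [hi]
    · simpa [h.rowCount_eq, hi] using hB p.1 i
  refine (Nat.div_eq_of_lt_le ?_ ?_).symm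
  · calc q * b = ∑ _i : Fin b, q := by simp [mul_comm]
      _ ≤ ∑ i, rowCount A i := sum_le_sum fun i _ => hge i
      _ = mcount A := (mcount_eq_sum_rowCount A).symm
  · calc mcount A = ∑ i, rowCount A i := mcount_eq_sum_rowCount A
      _ < ∑ _i : Fin b, (q + 1) :=
        sum_lt_sum (fun i _ => hA i p.1) ⟨p.1, mem_univ _, lt_add_one q⟩
      _ = (q + 1) * b := by simp [mul_comm]

theorem mcount_div_lt (hA : AlmostBalanced A) (hB : AlmostBalanced B) (h : IsFlip A B p)
    (hA' : AlmostBalanced A') (hB' : AlmostBalanced B') (h' : IsFlip A' B' p')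
    (hrow : p.1 = p'.1) (hle : B ≤ A') : mcount A / b < mcount A' / b := by
  calc mcount A / b = rowCount A p.1 := (h.rowCount_eq_mcount_div hA hB).symm
    _ < rowCount B p.1 := by simp [h.rowCount_eq]
    _ ≤ rowCount A' p.1 := rowCount_mono hle _
    _ = mcount A' / b := by rw [hrow]; exact h'.rowCount_eq_mcount_div hA' hB'

end IsFlip

theorem card_filter_eq_one_of_bijective {α β : Type*} [Fintype α] [DecidableEq β]
    {g : α → β} (hg : Bijective g) (y : β) : (univ.filter fun x => g x = y).card = 1 := by
  obtain ⟨x, rfl⟩ := hg.2 y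
  exact card_eq_one.mpr ⟨x, by ext; simp [hg.1.eq_iff]⟩

theorem isValidPlacement_of_mem_iff {P : Finset (Fin (a * b) × Fin (a * b))}
    (σ : Fin (a * b) → Fin (a * b)) (hP : ∀ p, p ∈ P ↔ p.1 = σ p.2) (hσ : Injective σ)
    (hblock : Injective fun c : Fin (a * b) => ((σ c).val / a, c.val / b)) :
    IsValidPlacement a b P := by
  have hPmap : P = univ.map ⟨fun c => (σ c, c), fun c c' h => congrArg Prod.snd h⟩ := by
    ext p
    simp only [mem_map, mem_univ, true_and, hP]
    exact ⟨fun h => ⟨p.2, Prod.ext h.symm rfl⟩, by rintro ⟨c, rfl⟩; rfl⟩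
  have hcard : ∀ (q : Fin (a * b) × Fin (a * b) → Prop) [DecidablePred q],
      (P.filter q).card = (univ.filter fun c => q (σ c, c)).card := by
    intro q _
    rw [hPmap, filter_map, card_map]
    rfl
  refine ⟨fun r => ?_, fun c => ?_, fun i j => ?_⟩
  · rw [hcard]
    exact card_filter_eq_one_of_bijective (Finite.injective_iff_bijective.mp hσ) r
  · rw [hcard, filter_eq', if_pos (mem_univ c), card_singleton]
  · let g : Fin (a * b) → Fin b × Fin a := fun c =>
      (⟨(σ c).val / a, Nat.div_lt_of_lt_mul (σ c).isLt⟩,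
        ⟨c.val / b, Nat.div_lt_of_lt_mul (by simp [mul_comm])⟩)
    have hg : Bijective g := (Fintype.bijective_iff_injective_and_card g).mpr
      ⟨fun c c' h => hblock (by simpa [g, Fin.ext_iff] using h), by simp [mul_comm]⟩
    rw [hcard]
    simpa [g, Prod.ext_iff, Fin.ext_iff] using card_filter_eq_one_of_bijective hg (i, j)

variable {S : Finset (Fin (a * b) × Fin (a * b))}

theorem GEdge.exists_isFlip {A B : Fin b → Fin a → Bool} (h : GEdge a b S A B) :
    ∃ (p : Fin b × Fin a) (c : Fin (a * b)),
      (AlmostBalanced A ∧ AlmostBalanced B ∧ IsFlip A B p) ∧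
      mcount B = c.val + 1 ∧ (rowIdx a b p.1 p.2, c) ∈ S :=
  let ⟨hA, hB, j, k, c, h₀, h₁, h₂, hc, hS⟩ := h
  ⟨(j, k), c, ⟨hA, hB, h₀, h₁, h₂⟩, hc, hS⟩

section Sequence

variable {M : ℕ → Fin b → Fin a → Bool} {N : ℕ} {f : Fin N → Fin b × Fin a}

theorem injective_of_isFlip (hM : Monotone M)
    (hf : ∀ n : Fin N, IsFlip (M n) (M (n + 1)) (f n)) : Injective f :=
  Injective.of_lt_imp_ne fun m n hmn heq => (hf m).not_le_of_isFlip (heq ▸ hf n) (hM hmn)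

theorem injective_row_div_of_isFlip (hM : Monotone M)
    (hf : ∀ n : Fin N,
      AlmostBalanced (M n) ∧ AlmostBalanced (M (n + 1)) ∧ IsFlip (M n) (M (n + 1)) (f n))
    (hcount : ∀ n : Fin N, mcount (M n) = n) : Injective fun n => ((f n).1.val, n.val / b) :=
  Injective.of_lt_imp_ne fun m n hmn heq => by
    obtain ⟨hrow, hdiv⟩ := Prod.ext_iff.mp heq
    have := (hf m).2.2.mcount_div_lt (hf m).1 (hf m).2.1 (hf n).1 (hf n).2.1 (hf n).2.2
      (Fin.ext hrow) (hM hmn)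
    rw [hcount, hcount] at this
    exact this.ne hdiv

end Sequence

variable {l : List (Fin b → Fin a → Bool)}

theorem gEdge_getD (hl : l.IsChain (GEdge a b S)) {i : ℕ} (hi : i + 1 < l.length) :
    GEdge a b S (l.getD i ⊤) (l.getD (i + 1) ⊤) := by
  rw [List.getD_eq_getElem _ _ (by omega), List.getD_eq_getElem _ _ hi]
  exact List.isChain_iff_getElem.mp hl i hi

/-- Continued by the all-one matrix, the path is a monotone sequence indexed by all of `ℕ`. -/
theorem monotone_getD (hl : l.IsChain (GEdge a b S)) : Monotone fun i => l.getD i ⊤ :=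
  monotone_nat_of_le_succ fun i => by
    by_cases hi : i + 1 < l.length
    · obtain ⟨p, -, ⟨-, -, hp⟩, -⟩ := (gEdge_getD hl hi).exists_isFlip
      exact hp.le
    · rw [List.getD_eq_default _ _ (not_lt.mp hi)]
      exact le_top

theorem mcount_getD (hl : l.IsChain (GEdge a b S)) (hhead : l.head? = some ⊥) :
    ∀ i < l.length, mcount (l.getD i ⊤) = i
  | 0, _ => by rw [List.getD_eq_getElem?_getD, ← List.head?_eq_getElem?, hhead]; exact mcount_bot
  | i + 1, hi => by
    obtain ⟨p, -, ⟨-, -, hp⟩, -⟩ := (gEdge_getD hl hi).exists_isFlip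
    rw [hp.mcount_eq, mcount_getD hl hhead i (by omega)]

theorem length_eq_of_isChain (hl : l.IsChain (GEdge a b S)) (hhead : l.head? = some ⊥)
    (hlast : l.getLast? = some ⊤) : l.length = a * b + 1 := by
  have hpos : 0 < l.length := List.length_pos_iff.mpr (by rintro rfl; simp at hhead)
  have := mcount_getD hl hhead (l.length - 1) (by omega)
  rw [List.getD_eq_getElem?_getD, ← List.getLast?_eq_getElem?, hlast, Option.getD_some,
    mcount_top] at this
  rw [mul_comm]
  omega

end

theorem path_gives_placement (a b : ℕ)
    (S : Finset (Fin (a*b) × Fin (a*b))) (l : List (Fin b → Fin a → Bool))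
    (hchain : l.Chain' (GEdge a b S))
    (hhead : l.head? = some (fun _ _ => false))
    (hlast : l.getLast? = some (fun _ _ => true))
    (P : Finset (Fin (a*b) × Fin (a*b)))
    (hP : ∀ p : Fin (a*b) × Fin (a*b), p ∈ P ↔
      ∃ (i : ℕ) (h : i + 1 < l.length) (j : Fin b) (k : Fin a),
        (l.get ⟨i, by omega⟩) j k = false ∧ (l.get ⟨i+1, h⟩) j k = true ∧
        p.1 = rowIdx a b j k ∧ p.2.val + 1 = mcount (l.get ⟨i+1, h⟩)) :
    IsValidPlacement a b P ∧ ∀ p ∈ P, p ∈ S := by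
  have hlen := length_eq_of_isChain hchain hhead hlast
  have hcount : ∀ i ≤ a * b, mcount (l.getD i ⊤) = i :=
    fun i hi => mcount_getD hchain hhead i (by omega)
  choose f c hstep hc hS using fun n : Fin (a * b) =>
    (gEdge_getD hchain (i := n) (by omega)).exists_isFlip
  have hflip := fun n => (hstep n).2.2
  have hPf : ∀ p, p ∈ P ↔ p.1 = rowIdx a b (f p.2).1 (f p.2).2 := by
    intro p
    simp only [hP, List.get_eq_getElem, ← List.getD_eq_getElem _ ⊤]
    constructor
    · rintro ⟨i, hi, j, k, h₀, h₁, hp, hi'⟩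
      rw [hcount _ (by omega)] at hi'
      obtain rfl : i = p.2 := by omega
      rw [hp, ← (hflip p.2).eq_of_false_of_true (p' := (j, k)) h₀ h₁]
    · intro hp
      exact ⟨p.2, by omega, (f p.2).1, (f p.2).2, (hflip p.2).1, (hflip p.2).2.1, hp,
        (hcount _ p.2.isLt).symm⟩
  refine ⟨isValidPlacement_of_mem_iff _ hPf
    (rowIdx_injective_s10.comp (injective_of_isFlip (monotone_getD hchain) hflip)) ?_,
    fun p hp => ?_⟩
  · simpa only [comp_apply, rowIdx_val_div] using
      injective_row_div_of_isFlip (monotone_getD hchain) hstep fun n => hcount n n.isLt.le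
  · obtain ⟨r, n⟩ := p
    obtain rfl : r = rowIdx a b (f n).1 (f n).2 := (hPf _).mp hp
    have hcn : c n = n := Fin.ext (by have := hc n; rw [hcount _ n.isLt] at this; omega)
    simpa [hcn] using hS n
end

section
/- For any 3-CNF formula X, the 4-CNF formula obtained by adding a fresh variable v₀ to every clause of X, and then splitting each 4-clause (a∨b∨c∨d) into (a∨b∨x)∧(¬x∨c∨d) with a fresh variable x per clause, yields a 3-CNF formula X' such that (1) X' is satisfiable by the assignment making v₀ true (extended appropriately), and (2) X' has a satisfying assignment with v₀ false if and only if X is satisfiable. -/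
/-- A literal: a variable (a natural number) together with a polarity. -/
abbrev Lit := ℕ × Bool

/-- Value of a literal under an assignment. -/
def litVal (σ : ℕ → Bool) (l : Lit) : Bool := if l.2 then σ l.1 else !(σ l.1)

/-- A clause with exactly three literals. -/
abbrev Clause3 := Lit × Lit × Lit

/-- Value of a 3-clause under an assignment. -/
def clause3Val (σ : ℕ → Bool) (C : Clause3) : Bool :=
  litVal σ C.1 || litVal σ C.2.1 || litVal σ C.2.2

/-- Satisfaction of a 3-CNF formula, given as a list of 3-clauses. -/
def Sat3 (σ : ℕ → Bool) (F : List Clause3) : Prop := ∀ C ∈ F, clause3Val σ C = true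

/-- A variable occurs in a 3-clause. -/
def occursClause3 (v : ℕ) (C : Clause3) : Prop :=
  C.1.1 = v ∨ C.2.1.1 = v ∨ C.2.2.1 = v

/-- A variable occurs in a 3-CNF formula. -/
def occurs3 (v : ℕ) (F : List Clause3) : Prop := ∃ C ∈ F, occursClause3 v C

/-- Add the fresh variable `v₀` to each clause `(a ∨ b ∨ c)` of `X`, obtaining
`(a ∨ b ∨ c ∨ v₀)`, and split it into `(a ∨ b ∨ xᵢ) ∧ (¬xᵢ ∨ c ∨ v₀)` using a
fresh variable `xs i` for the `i`-th clause. -/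
def splitAdd (v0 : ℕ) (xs : ℕ → ℕ) (X : List Clause3) : List Clause3 :=
  (X.zipIdx.map Prod.swap).flatMap fun ic =>
    [(ic.2.1, ic.2.2.1, ((xs ic.1, true) : Lit)),
     (((xs ic.1, false) : Lit), ic.2.2.2, ((v0, true) : Lit))]


/-!
With `v₀` true every split clause `(¬xᵢ ∨ c ∨ v₀)` holds, and setting all `xᵢ` true satisfies
the others. With `v₀` false, resolving the two halves of clause `i` on `xᵢ` gives back
`(a ∨ b ∨ c)`, so a model of `X'` is a model of `X`. Conversely a model of `X` extends to one
of `X'` with `v₀` false by letting `xᵢ := ¬(a ∨ b)` for the `i`-th clause; this is consistent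
because `v₀` and the `xᵢ` are fresh and pairwise distinct.
-/

@[simp]
theorem litVal_pos (σ : ℕ → Bool) (v : ℕ) : litVal σ (v, true) = σ v := rfl

@[simp]
theorem litVal_neg (σ : ℕ → Bool) (v : ℕ) : litVal σ (v, false) = !σ v := rfl

theorem litVal_congr {σ τ : ℕ → Bool} {l : Lit} (h : τ l.1 = σ l.1) : litVal τ l = litVal σ l := by
  simp only [litVal, h]

theorem mem_splitAdd {v0 : ℕ} {xs : ℕ → ℕ} {X : List Clause3} {C : Clause3} :
    C ∈ splitAdd v0 xs X ↔ ∃ i D, X[i]? = some D ∧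
      (C = (D.1, D.2.1, (xs i, true)) ∨ C = ((xs i, false), D.2.2, (v0, true))) := by
  simp [splitAdd, List.mem_zipIdx_iff_getElem?]

theorem sat3_splitAdd_iff {σ : ℕ → Bool} {v0 : ℕ} {xs : ℕ → ℕ} {X : List Clause3} :
    Sat3 σ (splitAdd v0 xs X) ↔ ∀ i D, X[i]? = some D →
      clause3Val σ (D.1, D.2.1, (xs i, true)) = true ∧
      clause3Val σ ((xs i, false), D.2.2, (v0, true)) = true := by
  simp only [Sat3, mem_splitAdd]
  constructor
  · exact fun h i D hD => ⟨h _ ⟨i, D, hD, Or.inl rfl⟩, h _ ⟨i, D, hD, Or.inr rfl⟩⟩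
  · rintro h C ⟨i, D, hD, rfl | rfl⟩
    exacts [(h i D hD).1, (h i D hD).2]

theorem sat3_splitAdd_const_true (v0 : ℕ) (xs : ℕ → ℕ) (X : List Clause3) :
    Sat3 (fun _ => true) (splitAdd v0 xs X) :=
  sat3_splitAdd_iff.2 fun _ _ _ => by simp [clause3Val]

theorem clause3Val_of_resolve {σ : ℕ → Bool} {a b c : Lit} {x v0 : ℕ} (h0 : σ v0 = false)
    (h₁ : clause3Val σ (a, b, (x, true)) = true)
    (h₂ : clause3Val σ ((x, false), c, (v0, true)) = true) :
    clause3Val σ (a, b, c) = true := by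
  simp only [clause3Val, litVal_pos, litVal_neg, h0, Bool.or_false] at h₁ h₂ ⊢
  cases hx : σ x <;> simp_all

theorem Sat3.of_splitAdd {σ : ℕ → Bool} {v0 : ℕ} {xs : ℕ → ℕ} {X : List Clause3}
    (h0 : σ v0 = false) (h : Sat3 σ (splitAdd v0 xs X)) : Sat3 σ X := by
  intro C hC
  obtain ⟨i, hi, rfl⟩ := List.getElem_of_mem hC
  obtain ⟨h₁, h₂⟩ := sat3_splitAdd_iff.1 h i _ (List.getElem?_eq_getElem hi)
  exact clause3Val_of_resolve h0 h₁ h₂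

noncomputable def splitAssign (σ : ℕ → Bool) (v0 : ℕ) (xs : ℕ → ℕ) (X : List Clause3) : ℕ → Bool :=
  Function.extend xs (fun i => !(litVal σ (X.getD i default).1 || litVal σ (X.getD i default).2.1))
    (Function.update σ v0 false)

section splitAssign

variable {σ : ℕ → Bool} {v0 : ℕ} {xs : ℕ → ℕ} {X : List Clause3}

theorem splitAssign_apply_of_getElem? (hinj : Function.Injective xs) {i : ℕ} {D : Clause3}
    (hD : X[i]? = some D) :
    splitAssign σ v0 xs X (xs i) = !(litVal σ D.1 || litVal σ D.2.1) := by
  rw [splitAssign, hinj.extend_apply, List.getD_eq_getElem?_getD, hD, Option.getD_some]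

theorem splitAssign_apply_self (hne : ∀ i, xs i ≠ v0) : splitAssign σ v0 xs X v0 = false := by
  rw [splitAssign, Function.extend_apply' _ _ _ fun ⟨i, hi⟩ => hne i hi, Function.update_self]

theorem splitAssign_apply_of_occurs3 (hv0 : ¬ occurs3 v0 X) (hxs : ∀ i, ¬ occurs3 (xs i) X)
    {v : ℕ} (hv : occurs3 v X) : splitAssign σ v0 xs X v = σ v := by
  rw [splitAssign, Function.extend_apply' _ _ _ fun ⟨i, hi⟩ => hxs i (hi ▸ hv),
    Function.update_of_ne (by rintro rfl; exact hv0 hv)]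

theorem sat3_splitAdd_splitAssign (hv0 : ¬ occurs3 v0 X) (hxs : ∀ i, ¬ occurs3 (xs i) X)
    (hinj : Function.Injective xs) (hne : ∀ i, xs i ≠ v0) (hσ : Sat3 σ X) :
    Sat3 (splitAssign σ v0 xs X) (splitAdd v0 xs X) := by
  refine sat3_splitAdd_iff.2 fun i D hD => ?_
  have hDX : D ∈ X := List.mem_of_getElem? hD
  have hlit : ∀ l : Lit, occursClause3 l.1 D → litVal (splitAssign σ v0 xs X) l = litVal σ l :=
    fun l hl => litVal_congr (splitAssign_apply_of_occurs3 hv0 hxs ⟨D, hDX, hl⟩)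
  have hσD := hσ D hDX
  simp only [clause3Val, litVal_pos, litVal_neg, splitAssign_apply_of_getElem? hinj hD,
    splitAssign_apply_self hne, hlit D.1 (Or.inl rfl), hlit D.2.1 (Or.inr (Or.inl rfl)),
    hlit D.2.2 (Or.inr (Or.inr rfl))] at hσD ⊢
  revert hσD
  cases litVal σ D.1 <;> cases litVal σ D.2.1 <;> simp

end splitAssign

theorem splitAdd_correct (X : List Clause3) (v0 : ℕ) (xs : ℕ → ℕ)
    (hv0 : ¬ occurs3 v0 X) (hxs : ∀ i, ¬ occurs3 (xs i) X)
    (hinj : Function.Injective xs) (hne : ∀ i, xs i ≠ v0) :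
    (∃ σ : ℕ → Bool, σ v0 = true ∧ Sat3 σ (splitAdd v0 xs X)) ∧
    ((∃ σ : ℕ → Bool, σ v0 = false ∧ Sat3 σ (splitAdd v0 xs X)) ↔
      (∃ σ : ℕ → Bool, Sat3 σ X)) :=
  ⟨⟨fun _ => true, rfl, sat3_splitAdd_const_true v0 xs X⟩,
    fun ⟨σ, h0, hσ⟩ => ⟨σ, hσ.of_splitAdd h0⟩,
    fun ⟨σ, hσ⟩ => ⟨splitAssign σ v0 xs X, splitAssign_apply_self hne,
      sat3_splitAdd_splitAssign hv0 hxs hinj hne hσ⟩⟩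
end

section
/- For m = 3 (standard 9×9 Sudoku), the number of 3×3 almost-balanced 0–1 matrices equals 290, and the number of valid placements equals 3!^6 = 46656. -/
/-!
A placement meets every row once, so it is the graph of a map `f` from rows to columns, and
meeting every column once makes `f` bijective. Write a row as (band `i`, row `s` inside the band)
and a column as (stack `j`, column `t` inside the stack). Meeting every block once says that
for each band `i` the map `s ↦ j` is a bijection `g i`; then for each stack `j` the map sending
a band to the column it reaches inside stack `j` is a bijection `h j`, and `f` is recovered from
`(g, h)`. Hence there are `(a!)^b (b!)^a` placements.
-/

open Finset Function
open scoped Nat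

section Graph

variable {α β : Type*} [Fintype α]

def graphFinset (f : α → β) : Finset (α × β) :=
  univ.map ⟨fun x => (x, f x), fun _ _ h => congrArg Prod.fst h⟩

@[simp]
theorem mem_graphFinset {f : α → β} {p : α × β} : p ∈ graphFinset f ↔ f p.1 = p.2 := by
  rw [graphFinset, mem_map]
  constructor
  · rintro ⟨x, -, rfl⟩
    rfl
  · intro h
    exact ⟨p.1, mem_univ _, Prod.ext rfl h⟩

theorem card_filter_graphFinset (f : α → β) (q : α × β → Prop) [DecidablePred q] :
    #((graphFinset f).filter q) = #(univ.filter fun x => q (x, f x)) := by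
  rw [graphFinset, filter_map, card_map]
  rfl

theorem graphFinset_injective : Injective (graphFinset : (α → β) → Finset (α × β)) := by
  intro f f' h
  funext x
  have : (x, f x) ∈ graphFinset f' := h ▸ mem_graphFinset.mpr rfl
  exact (mem_graphFinset.mp this).symm

theorem exists_graphFinset_eq [DecidableEq α] {P : Finset (α × β)}
    (hP : ∀ x, #(P.filter fun p => p.1 = x) = 1) : ∃ f : α → β, graphFinset f = P := by
  choose p hp using fun x => card_eq_one.mp (hP x)
  have hmem (x) : p x ∈ P ∧ (p x).1 = x := mem_filter.mp (hp x ▸ mem_singleton_self _)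
  refine ⟨fun x => (p x).2, Finset.ext fun q => ?_⟩
  have hq : q ∈ P ↔ q = p q.1 := by
    rw [← mem_singleton, ← hp, mem_filter, and_iff_left rfl]
  rw [mem_graphFinset, hq, Prod.ext_iff, (hmem q.1).2, eq_comm]
  simp

noncomputable def graphFinsetEquiv [DecidableEq α] (r : Finset (α × β) → Prop)
    (hr : ∀ P, r P → ∀ x, #(P.filter fun p => p.1 = x) = 1) :
    {f : α → β // r (graphFinset f)} ≃ {P : Finset (α × β) // r P} :=
  Equiv.ofBijective (fun f => ⟨graphFinset f.1, f.2⟩)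
    ⟨fun f f' h => Subtype.ext (graphFinset_injective (congrArg Subtype.val h)), fun P => by
      obtain ⟨f, hf⟩ := exists_graphFinset_eq (hr P.1 P.2)
      exact ⟨⟨f, hf ▸ P.2⟩, Subtype.ext hf⟩⟩

theorem forall_card_filter_snd_graphFinset_eq_one_iff [DecidableEq β] [Fintype β]
    (f : α → β) :
    (∀ y, #((graphFinset f).filter fun p => p.2 = y) = 1) ↔ Bijective f := by
  simp only [card_filter_graphFinset, ← Fintype.existsUnique_iff_card_one,
    bijective_iff_existsUnique]

end Graph

section BandStack

variable {B A A' C : Type*}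

def bandStack (g : B → A ≃ A') (h : A' → B ≃ C) (x : B × A) : A' × C :=
  (g x.1 x.2, h (g x.1 x.2) x.1)

theorem bijective_bandStack (g : B → A ≃ A') (h : A' → B ≃ C) :
    Bijective (bandStack g h) := by
  refine bijective_iff_has_inverse.mpr
    ⟨fun y => ((h y.1).symm y.2, (g ((h y.1).symm y.2)).symm y.1), fun x => ?_, fun y => ?_⟩ <;>
    simp [bandStack]

theorem bijective_snd_of_bijective_fst {F : B × A → A' × C} (hF : Bijective F)
    (hfst : ∀ i, Bijective fun s => (F (i, s)).1) (j : A') :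
    Bijective fun i => (F (i, (Equiv.ofBijective _ (hfst i)).symm j)).2 := by
  have hj (i) : (F (i, (Equiv.ofBijective _ (hfst i)).symm j)).1 = j :=
    Equiv.ofBijective_apply_symm_apply (fun s => (F (i, s)).1) _ j
  constructor
  · intro i i' hii'
    exact congrArg Prod.fst (hF.1 (Prod.ext ((hj i).trans (hj i').symm) hii'))
  · intro t
    obtain ⟨⟨i, s⟩, hx⟩ := hF.2 (j, t)
    refine ⟨i, ?_⟩
    have hs : (Equiv.ofBijective _ (hfst i)).symm j = s := by
      rw [Equiv.symm_apply_eq, Equiv.ofBijective_apply, hx]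
    simp [hs, hx]

noncomputable def bandStackEquiv :
    {F : B × A → A' × C // Bijective F ∧ ∀ i, Bijective fun s => (F (i, s)).1} ≃
      (B → A ≃ A') × (A' → B ≃ C) where
  toFun F :=
    (fun i => Equiv.ofBijective _ (F.2.2 i),
      fun j => Equiv.ofBijective _ (bijective_snd_of_bijective_fst F.2.1 F.2.2 j))
  invFun gh := ⟨bandStack gh.1 gh.2, bijective_bandStack gh.1 gh.2, fun i => (gh.1 i).bijective⟩
  left_inv F := by
    ext x : 2
    simp [bandStack]
  right_inv gh := by
    ext <;> simp [bandStack]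

end BandStack

theorem finProdFinEquiv_apply_val_div {m n : ℕ} (x : Fin m × Fin n) :
    (finProdFinEquiv x).val / n = x.1.val := by
  rw [finProdFinEquiv_apply_val, Nat.add_mul_div_left _ _ x.2.pos, Nat.div_eq_of_lt x.2.isLt,
    zero_add]

theorem existsUnique_prod_fst_eq_and {B A : Type*} {p : B × A → Prop} (i : B) :
    (∃! x : B × A, x.1 = i ∧ p x) ↔ ∃! s, p (i, s) := by
  constructor
  · rintro ⟨⟨i', s⟩, ⟨rfl, hs⟩, huniq⟩
    exact ⟨s, hs, fun s' hs' => congrArg Prod.snd (huniq (i', s') ⟨rfl, hs'⟩)⟩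
  · rintro ⟨s, hs, huniq⟩
    refine ⟨(i, s), ⟨rfl, hs⟩, ?_⟩
    rintro ⟨i', s'⟩ ⟨rfl, hs'⟩
    rw [huniq s' hs']

def bandRowEquiv (a b : ℕ) : Fin b × Fin a ≃ Fin (a * b) :=
  finProdFinEquiv.trans (finCongr (Nat.mul_comm b a))

theorem bandRowEquiv_apply_val_div {a b : ℕ} (x : Fin b × Fin a) :
    (bandRowEquiv a b x).val / a = x.1.val :=
  finProdFinEquiv_apply_val_div x

theorem isValidPlacement_graphFinset_iff {a b : ℕ} (F : Fin b × Fin a → Fin a × Fin b) :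
    IsValidPlacement a b (graphFinset ((bandRowEquiv a b).arrowCongr finProdFinEquiv F)) ↔
      Bijective F ∧ ∀ i, Bijective fun s => (F (i, s)).1 := by
  have hrows (f : Fin (a * b) → Fin (a * b)) (r : Fin (a * b)) :
      #((graphFinset f).filter fun p => p.1 = r) = 1 := by
    simp [card_filter_graphFinset, filter_eq']
  have hbij : Bijective ((bandRowEquiv a b).arrowCongr finProdFinEquiv F) ↔ Bijective F := by
    change Bijective (finProdFinEquiv ∘ F ∘ (bandRowEquiv a b).symm) ↔ _
    rw [EquivLike.comp_bijective, EquivLike.bijective_comp]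
  rw [IsValidPlacement, forall_card_filter_snd_graphFinset_eq_one_iff, hbij]
  simp only [hrows, implies_true, true_and, card_filter_graphFinset,
    ← Fintype.existsUnique_iff_card_one]
  refine and_congr_right' (forall_congr' fun i => ?_)
  rw [bijective_iff_existsUnique]
  refine forall_congr' fun j => ?_
  refine .trans ?_ (existsUnique_prod_fst_eq_and (p := fun x => (F x).1 = j) i)
  refine ((bandRowEquiv a b).existsUnique_congr fun x => ?_).symm
  simp only [Equiv.arrowCongr_apply, comp_apply, Equiv.symm_apply_apply,
    bandRowEquiv_apply_val_div, finProdFinEquiv_apply_val_div, Fin.val_inj]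

theorem card_isValidPlacement (a b : ℕ) :
    Nat.card {P // IsValidPlacement a b P} = a ! ^ b * b ! ^ a := by
  rw [← Nat.card_congr (graphFinsetEquiv (IsValidPlacement a b) fun _ hP => hP.1),
    ← Nat.card_congr (((bandRowEquiv a b).arrowCongr finProdFinEquiv).subtypeEquiv
      fun F => (isValidPlacement_graphFinset_iff F).symm),
    Nat.card_congr bandStackEquiv]
  simp [Fintype.card_equiv (Equiv.refl _)]

instance {a b : ℕ} (M : Fin a → Fin b → Bool) : Decidable (AlmostBalanced M) :=
  inferInstanceAs (Decidable (∀ i i', rowCount M i ≤ rowCount M i' + 1))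

-- The row sums lie in `{k, k + 1}` for some `k`; as `1, 3, 3, 1` rows have sum `0, 1, 2, 3`,
-- inclusion–exclusion over `k` gives `4³ + 6³ + 4³ - 3³ - 3³ = 290`.
theorem card_almostBalanced_three :
    Nat.card {M : Fin 3 → Fin 3 → Bool // AlmostBalanced M} = 290 := by
  rw [Nat.card_eq_fintype_card]
  set_option maxRecDepth 10000 in decide

theorem nine_by_nine_counts :
    Nat.card {M : Fin 3 → Fin 3 → Bool // AlmostBalanced M} = 290 ∧
    Nat.card {P : Finset (Fin (3*3) × Fin (3*3)) // IsValidPlacement 3 3 P} =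
      Nat.factorial 3 ^ 6 ∧
    Nat.factorial 3 ^ 6 = 46656 := by
  refine ⟨card_almostBalanced_three, ?_, by decide⟩
  rw [card_isValidPlacement, ← pow_add]
end
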